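/- arXiv:1603.04352 — 9 statements merged into one kernel-verified Lean document; each statement's English description precedes it below -/
import Mathlib

section
/- For every positive integer N, the number of representations of N as a sum of two positive squares (counting order) is congruent modulo 2 to d_o(N), the number of odd divisors of N, except that when N is a perfect square the count of representations plus 1 is congruent to d_o(N) mod 2. Equivalently: a(N) ≡ d_o(N) (mod 2), where a(N) = #{k ≥ 1 : k² = N} + #{(m,k) : m,k ≥ 1, m² + k² = N}. -/
open Finset

/-- parity of a finset with an involution equals parity of fixed points -/
lemma card_parity_involution {α : Type*} [DecidableEq α] (s : Finset α) (g : α → α)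
    (hmem : ∀ a ∈ s, g a ∈ s) (hinv : ∀ a ∈ s, g (g a) = a) :
    ((s.card : ZMod 2)) = ((s.filter fun a => g a = a).card : ZMod 2) := by
  classical
  have hsplit := Finset.card_filter_add_card_filter_not
    (s := s) (p := fun a => g a = a)
  have h0 : ∑ _x ∈ (s.filter fun a => ¬ g a = a), (1 : ZMod 2) = 0 := by
    apply Finset.sum_involution (g := fun a _ => g a)
    · intro a ha; decide
    · intro a ha h; exact (Finset.mem_filter.mp ha).2
    · intro a ha
      rcases Finset.mem_filter.mp ha with ⟨has, hne⟩
      refine Finset.mem_filter.mpr ⟨hmem a has, ?_⟩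
      rw [hinv a has]
      exact fun h => hne h.symm
    · intro a ha; exact hinv a (Finset.mem_filter.mp ha).1
  have hcard : (((s.filter fun a => ¬ g a = a).card : ZMod 2)) = 0 := by
    rw [Finset.card_eq_sum_ones]; push_cast; simpa using h0
  have : (s.card : ZMod 2) = ((s.filter fun a => g a = a).card : ZMod 2)
      + ((s.filter fun a => ¬ g a = a).card : ZMod 2) := by
    rw [← Nat.cast_add, hsplit]
  rw [this, hcard, add_zero]

/-- uniqueness of 2-adic decomposition -/
lemma two_adic_uniq {a b m n : ℕ} (hm : ¬ 2 ∣ m) (hn : ¬ 2 ∣ n)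
    (h : 2 ^ a * m = 2 ^ b * n) : a = b ∧ m = n := by
  have hm0 : m ≠ 0 := fun h0 => hm (h0 ▸ dvd_zero 2)
  have hn0 : n ≠ 0 := fun h0 => hn (h0 ▸ dvd_zero 2)
  have hab : a = b := by
    have h1 : (2 ^ a * m).factorization 2 = a := by
      rw [Nat.factorization_mul (pow_ne_zero _ two_ne_zero) hm0]
      simp [Nat.Prime.factorization_pow, Nat.factorization_eq_zero_of_not_dvd hm,
        Nat.Prime.factorization_self Nat.prime_two]
    have h2 : (2 ^ b * n).factorization 2 = b := by
      rw [Nat.factorization_mul (pow_ne_zero _ two_ne_zero) hn0]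
      simp [Nat.Prime.factorization_pow, Nat.factorization_eq_zero_of_not_dvd hn,
        Nat.Prime.factorization_self Nat.prime_two]
    rw [← h1, ← h2, h]
  refine ⟨hab, ?_⟩
  subst hab
  exact Nat.eq_of_mul_eq_mul_left (pow_pos two_pos a) h

lemma decomp_square {a m : ℕ} (hm : ¬ 2 ∣ m) :
    IsSquare (2 ^ a * m) ↔ (Even a ∧ IsSquare m) := by
  constructor
  · rintro ⟨k, hk⟩
    have hm0 : m ≠ 0 := fun h0 => hm (h0 ▸ dvd_zero 2)
    have hk0 : k ≠ 0 := by
      rintro rfl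
      have h2 : (0:ℕ) < 2 ^ a * m := Nat.mul_pos (pow_pos two_pos a) (Nat.pos_of_ne_zero hm0)
      rw [hk] at h2
      simp at h2
    set b := k.factorization 2 with hb
    set c := ordCompl[2] k with hc
    have hkdec : 2 ^ b * c = k := Nat.ordProj_mul_ordCompl_eq_self k 2
    have hcd : ¬ 2 ∣ c := Nat.not_dvd_ordCompl Nat.prime_two hk0
    have hcc : ¬ 2 ∣ c * c := by
      intro h
      rcases (Nat.Prime.dvd_mul Nat.prime_two).mp h with h | h <;> exact hcd h
    have heq : 2 ^ a * m = 2 ^ (b + b) * (c * c) := by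
      rw [hk, ← hkdec]; ring
    obtain ⟨h1, h2⟩ := two_adic_uniq hm hcc heq
    exact ⟨h1 ▸ Even.add_self b, ⟨c, h2⟩⟩
  · rintro ⟨⟨t, ht⟩, ⟨c, hc⟩⟩
    exact ⟨2 ^ t * c, by rw [ht, hc]; ring⟩

lemma decomp_twice {a m : ℕ} (hm : ¬ 2 ∣ m) :
    (∃ k : ℕ, 2 * k ^ 2 = 2 ^ a * m) ↔ (Odd a ∧ IsSquare m) := by
  constructor
  · rintro ⟨k, hk⟩
    have hm0 : m ≠ 0 := fun h0 => hm (h0 ▸ dvd_zero 2)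
    have hk0 : k ≠ 0 := by
      rintro rfl
      have h2 : (0:ℕ) < 2 ^ a * m := Nat.mul_pos (pow_pos two_pos a) (Nat.pos_of_ne_zero hm0)
      rw [← hk] at h2
      simp at h2
    set b := k.factorization 2 with hb
    set c := ordCompl[2] k with hc
    have hkdec : 2 ^ b * c = k := Nat.ordProj_mul_ordCompl_eq_self k 2
    have hcd : ¬ 2 ∣ c := Nat.not_dvd_ordCompl Nat.prime_two hk0
    have hcc : ¬ 2 ∣ c * c := by
      intro h
      rcases (Nat.Prime.dvd_mul Nat.prime_two).mp h with h | h <;> exact hcd h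
    have heq : 2 ^ a * m = 2 ^ (b + b + 1) * (c * c) := by
      rw [← hk, ← hkdec]; ring
    obtain ⟨h1, h2⟩ := two_adic_uniq hm hcc heq
    exact ⟨h1 ▸ ⟨b, by ring⟩, ⟨c, h2⟩⟩
  · rintro ⟨⟨t, ht⟩, ⟨c, hc⟩⟩
    exact ⟨2 ^ t * c, by rw [ht, hc]; ring⟩

/-- `a(N) ≡ d_o(N) (mod 2)`, where `a(N)` is the number of positive `k` with `k² = N`
plus the number of ordered pairs of positive integers `(m,k)` with `m² + k² = N`,
and `d_o(N)` is the number of odd divisors of `N`. -/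
theorem repr_two_squares_mod_two (N : ℕ) (hN : 0 < N) :
    (((Finset.range (N + 1)).filter (fun k => 1 ≤ k ∧ k ^ 2 = N)).card
      + (((Finset.range (N + 1)) ×ˢ (Finset.range (N + 1))).filter
          (fun p => 1 ≤ p.1 ∧ 1 ≤ p.2 ∧ p.1 ^ 2 + p.2 ^ 2 = N)).card) % 2
    = ((N.divisors.filter (fun d => Odd d)).card) % 2 := by
  classical
  set a := N.factorization 2 with ha
  set m := ordCompl[2] N with hmdef
  have hNm : 2 ^ a * m = N := Nat.ordProj_mul_ordCompl_eq_self N 2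
  have hm2 : ¬ 2 ∣ m := Nat.not_dvd_ordCompl Nat.prime_two hN.ne'
  have hm0 : 0 < m := Nat.ordCompl_pos 2 hN.ne'
  -- odd divisors of N = divisors of m
  have hD : N.divisors.filter (fun d => Odd d) = m.divisors := by
    ext d
    simp only [Finset.mem_filter, Nat.mem_divisors]
    constructor
    · rintro ⟨⟨hdN, -⟩, hodd⟩
      refine ⟨?_, hm0.ne'⟩
      have hcop : Nat.Coprime d (2 ^ a) :=
        Nat.Coprime.pow_right _ (Nat.coprime_two_right.mpr hodd)
      exact Nat.Coprime.dvd_of_dvd_mul_left hcop (hNm ▸ hdN)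
    · rintro ⟨hdm, -⟩
      refine ⟨⟨hdm.trans (Dvd.intro_left _ hNm), hN.ne'⟩, ?_⟩
      rw [Nat.odd_iff]
      have hd2 : ¬ 2 ∣ d := fun h => hm2 (h.trans hdm)
      omega
  -- parity of number of divisors of m
  have hdiv : ((m.divisors.card : ZMod 2)) = (if IsSquare m then 1 else 0) := by
    have h1 := card_parity_involution m.divisors (fun d => m / d)
      (fun d hd => by
        rcases Nat.mem_divisors.mp hd with ⟨hdm, h0⟩
        exact Nat.mem_divisors.mpr ⟨Nat.div_dvd_of_dvd hdm, h0⟩)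
      (fun d hd => by
        rcases Nat.mem_divisors.mp hd with ⟨hdm, h0⟩
        exact Nat.div_div_self hdm h0)
    rw [h1]
    by_cases hsq : IsSquare m
    · obtain ⟨r, hr⟩ := hsq
      have hr0 : 0 < r := by
        rcases Nat.eq_zero_or_pos r with rfl | h
        · simp [hr] at hm0
        · exact h
      have : m.divisors.filter (fun d => m / d = d) = {r} := by
        apply Finset.eq_singleton_iff_unique_mem.mpr
        constructor
        · refine Finset.mem_filter.mpr ⟨Nat.mem_divisors.mpr ⟨Dvd.intro_left r hr.symm, hm0.ne'⟩, ?_⟩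
          rw [hr]; exact Nat.mul_div_cancel_left r hr0
        · intro d hd
          rcases Finset.mem_filter.mp hd with ⟨hdmem, hfix⟩
          rcases Nat.mem_divisors.mp hdmem with ⟨hdm, -⟩
          have : d * d = m := by
            conv_rhs => rw [← Nat.div_mul_cancel hdm]
            rw [hfix]
          have : d * d = r * r := this.trans hr
          exact Nat.mul_self_inj.mp this
      rw [this, if_pos ⟨r, hr⟩, Finset.card_singleton, Nat.cast_one]
    · have : m.divisors.filter (fun d => m / d = d) = ∅ := by
        apply Finset.eq_empty_iff_forall_notMem.mpr
        intro d hd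
        rcases Finset.mem_filter.mp hd with ⟨hdmem, hfix⟩
        rcases Nat.mem_divisors.mp hdmem with ⟨hdm, -⟩
        apply hsq
        refine ⟨d, ?_⟩
        conv_lhs => rw [← Nat.div_mul_cancel hdm]
        rw [hfix]
      rw [this, if_neg hsq, Finset.card_empty, Nat.cast_zero]
  -- the square-count filter
  have hS1 : (((Finset.range (N + 1)).filter (fun k => 1 ≤ k ∧ k ^ 2 = N)).card : ZMod 2)
      = (if IsSquare N then 1 else 0) := by
    by_cases hsq : IsSquare N
    · obtain ⟨r, hr⟩ := hsq
      have hr0 : 0 < r := by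
        rcases Nat.eq_zero_or_pos r with rfl | h
        · simp [hr] at hN
        · exact h
      have : (Finset.range (N + 1)).filter (fun k => 1 ≤ k ∧ k ^ 2 = N) = {r} := by
        apply Finset.eq_singleton_iff_unique_mem.mpr
        refine ⟨Finset.mem_filter.mpr ⟨Finset.mem_range.mpr ?_, hr0, by rw [sq, ← hr]⟩, ?_⟩
        · have : r ≤ r * r := Nat.le_mul_of_pos_left r hr0
          omega
        · intro k hk
          rcases Finset.mem_filter.mp hk with ⟨-, -, hk2⟩
          have : k ^ 2 = r ^ 2 := by rw [hk2, hr, sq]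
          exact Nat.pow_left_injective (by norm_num) this
      rw [this, if_pos ⟨r, hr⟩, Finset.card_singleton, Nat.cast_one]
    · have : (Finset.range (N + 1)).filter (fun k => 1 ≤ k ∧ k ^ 2 = N) = ∅ := by
        apply Finset.eq_empty_iff_forall_notMem.mpr
        intro k hk
        rcases Finset.mem_filter.mp hk with ⟨-, -, hk2⟩
        exact hsq ⟨k, by rw [← hk2, sq]⟩
      rw [this, if_neg hsq, Finset.card_empty, Nat.cast_zero]
  -- the pair count: involution by swap
  set S2 := ((Finset.range (N + 1)) ×ˢ (Finset.range (N + 1))).filter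
    (fun p => 1 ≤ p.1 ∧ 1 ≤ p.2 ∧ p.1 ^ 2 + p.2 ^ 2 = N) with hS2def
  have hswap : ((S2.card : ZMod 2)) = ((S2.filter fun p => Prod.swap p = p).card : ZMod 2) := by
    apply card_parity_involution
    · intro p hp
      rcases Finset.mem_filter.mp hp with ⟨hpmem, h1, h2, h3⟩
      rcases Finset.mem_product.mp hpmem with ⟨hp1, hp2⟩
      refine Finset.mem_filter.mpr ⟨Finset.mem_product.mpr ⟨hp2, hp1⟩, h2, h1, by
        simpa [add_comm] using h3⟩
    · intro p _; exact Prod.swap_swap p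
  have hFix : ((S2.filter fun p => Prod.swap p = p).card : ZMod 2)
      = (if ∃ k : ℕ, 2 * k ^ 2 = N then 1 else 0) := by
    by_cases hex : ∃ k : ℕ, 2 * k ^ 2 = N
    · obtain ⟨k, hk⟩ := hex
      have hk0 : 0 < k := by
        rcases Nat.eq_zero_or_pos k with rfl | h
        · simp at hk; omega
        · exact h
      have hkN : k ≤ N := by
        have h1 : k ≤ k ^ 2 := Nat.le_self_pow two_ne_zero k
        omega
      have : S2.filter (fun p => Prod.swap p = p) = {(k, k)} := by
        apply Finset.eq_singleton_iff_unique_mem.mpr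
        constructor
        · refine Finset.mem_filter.mpr ⟨Finset.mem_filter.mpr
            ⟨Finset.mem_product.mpr ⟨Finset.mem_range.mpr (by omega),
              Finset.mem_range.mpr (by omega)⟩, hk0, hk0, by show k ^ 2 + k ^ 2 = N; omega⟩, rfl⟩
        · intro p hp
          rcases Finset.mem_filter.mp hp with ⟨hpS, hpfix⟩
          rcases Finset.mem_filter.mp hpS with ⟨-, h1, h2, h3⟩
          have heq : p.2 = p.1 := congrArg Prod.fst hpfix
          have h4 : 2 * p.1 ^ 2 = N := by rw [← h3, heq]; ring
          have : p.1 ^ 2 = k ^ 2 := by omega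
          have hp1 : p.1 = k := Nat.pow_left_injective (by norm_num) this
          have hp2 : p.2 = k := heq.trans hp1
          exact Prod.ext hp1 hp2
      rw [this, if_pos ⟨k, hk⟩, Finset.card_singleton, Nat.cast_one]
    · have : S2.filter (fun p => Prod.swap p = p) = ∅ := by
        apply Finset.eq_empty_iff_forall_notMem.mpr
        intro p hp
        rcases Finset.mem_filter.mp hp with ⟨hpS, hpfix⟩
        rcases Finset.mem_filter.mp hpS with ⟨-, h1, h2, h3⟩
        have heq : p.2 = p.1 := congrArg Prod.fst hpfix
        exact hex ⟨p.1, by rw [← h3, heq]; ring⟩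
      rw [this, if_neg hex, Finset.card_empty, Nat.cast_zero]
  -- assemble
  have e1 : IsSquare N ↔ Even a ∧ IsSquare m := by
    rw [← hNm]; exact decomp_square hm2
  have e2 : (∃ k : ℕ, 2 * k ^ 2 = N) ↔ Odd a ∧ IsSquare m := by
    rw [← hNm]; exact decomp_twice hm2
  have key : ((((Finset.range (N + 1)).filter (fun k => 1 ≤ k ∧ k ^ 2 = N)).card
      + S2.card : ℕ) : ZMod 2)
      = (((N.divisors.filter (fun d => Odd d)).card : ℕ) : ZMod 2) := by
    rw [hD, hdiv]
    push_cast
    rw [hS1, hswap, hFix]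
    simp only [e1, e2]
    by_cases h1 : IsSquare m <;> by_cases h2 : Even a <;>
      simp [h1, h2, ← Nat.not_even_iff_odd]
  exact (ZMod.natCast_eq_natCast_iff _ _ _).mp key
end

section
/- For a positive integer N, let r₂(N) denote the number of ordered pairs (a,b) of integers with a² + b² = N. Then r₂(N) = 4(d₁(N) − d₃(N)), where d₁(N) and d₃(N) are the numbers of divisors of N congruent to 1 and 3 modulo 4 respectively. -/
set_option synthInstance.maxHeartbeats 1000000
set_option maxHeartbeats 2000000
set_option linter.unreachableTactic false
set_option linter.unusedTactic false

open Finset Zsqrtd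

namespace JacobiTwoSq

local notation "ℤi" => GaussianInt

def chi (n : ℕ) : ℤ := if n % 4 = 1 then 1 else if n % 4 = 3 then -1 else 0

lemma chi_mul (m n : ℕ) : chi (m * n) = chi m * chi n := by
  unfold chi
  rw [Nat.mul_mod]
  have hm : m % 4 < 4 := Nat.mod_lt _ (by norm_num)
  have hn : n % 4 < 4 := Nat.mod_lt _ (by norm_num)
  interval_cases h1 : m % 4 <;> interval_cases h2 : n % 4 <;> norm_num

def chiAF : ArithmeticFunction ℤ := ⟨fun n => chi n, by simp [chi]⟩

lemma chiAF_mult : chiAF.IsMultiplicative :=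
  ⟨by simp [chiAF, chi], fun {m n} _ => chi_mul m n⟩

noncomputable def S (n : ℕ) : ℤ := ∑ d ∈ n.divisors, chi d

lemma S_mult {m n : ℕ} (h : m.Coprime n) : S (m * n) = S m * S n := by
  have h2 := (ArithmeticFunction.isMultiplicative_zeta.natCast.mul chiAF_mult).2 h
  rw [ArithmeticFunction.coe_zeta_mul_apply, ArithmeticFunction.coe_zeta_mul_apply,
    ArithmeticFunction.coe_zeta_mul_apply] at h2
  simpa [S, chiAF] using h2

lemma chi_pow (p k : ℕ) : chi (p ^ k) = chi p ^ k := by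
  induction k with
  | zero => simp [chi]
  | succ k ih => rw [pow_succ, pow_succ, chi_mul, ih]

lemma S_prime_pow {p : ℕ} (hp : p.Prime) (k : ℕ) :
    S (p ^ k) = ∑ j ∈ range (k + 1), chi p ^ j := by
  rw [S, Nat.sum_divisors_prime_pow hp]
  simp [chi_pow]


lemma norm_eq (z : ℤi) : z.norm = z.re * z.re + z.im * z.im := by
  rw [Zsqrtd.norm_def]; ring

lemma finite_norm (n : ℤ) : {z : ℤi | z.norm = n}.Finite := by
  have : {z : ℤi | z.norm = n} ⊆
      (fun p : ℤ × ℤ => (⟨p.1, p.2⟩ : ℤi)) '' ↑(Finset.Icc (-n) n ×ˢ Finset.Icc (-n) n) := by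
    intro z hz
    simp only [Set.mem_setOf_eq] at hz
    refine ⟨(z.re, z.im), ?_, rfl⟩
    have h := norm_eq z
    rw [hz] at h
    simp only [Finset.coe_product, Set.mem_prod, Finset.mem_coe, Finset.mem_Icc]
    constructor <;> constructor <;> nlinarith [sq_nonneg (z.re - 1), sq_nonneg (z.re + 1),
      sq_nonneg (z.im - 1), sq_nonneg (z.im + 1), sq_nonneg z.re, sq_nonneg z.im]
  exact Set.Finite.subset (Set.Finite.image _ (Finset.finite_toSet _)) this

noncomputable def F (n : ℕ) : ℕ := {z : ℤi | z.norm = (n : ℤ)}.ncard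

lemma ncard_image_mul (c : ℤi) (hc : c ≠ 0) (s : Set ℤi) :
    ((fun w => c * w) '' s).ncard = s.ncard :=
  Set.ncard_image_of_injective _ (mul_right_injective₀ hc)

lemma sq_emod_two (x : ℤ) : x * x % 2 = x % 2 := by
  obtain ⟨c, hc⟩ := Int.even_mul_succ_self (x - 1)
  have hxx : x * x = x + 2 * c := by linarith [hc]
  omega

lemma F_two_mul (M : ℕ) : F (2 * M) = F M := by
  have hkey : {z : ℤi | z.norm = ((2 * M : ℕ) : ℤ)} =
      (fun w => (⟨1, 1⟩ : ℤi) * w) '' {w : ℤi | w.norm = (M : ℤ)} := by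
    ext z
    simp only [Set.mem_setOf_eq, Set.mem_image]
    constructor
    · intro hz
      have h := norm_eq z
      rw [hz] at h
      push_cast at h
      have hre := sq_emod_two z.re
      have him := sq_emod_two z.im
      have hpar : (z.re + z.im) % 2 = 0 := by
        generalize z.re * z.re = A at h hre
        generalize z.im * z.im = B at h him
        omega
      refine ⟨⟨(z.re + z.im) / 2, (z.im - z.re) / 2⟩, ?_, ?_⟩
      · have : (⟨1, 1⟩ : ℤi).norm * (⟨(z.re + z.im) / 2, (z.im - z.re) / 2⟩ : ℤi).norm
            = ((2 * M : ℕ) : ℤ) := by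
          rw [← Zsqrtd.norm_mul]
          have hmul : ((⟨1, 1⟩ : ℤi) * ⟨(z.re + z.im) / 2, (z.im - z.re) / 2⟩ : ℤi) = z := by
            ext <;> simp only [Zsqrtd.re_mul, Zsqrtd.im_mul] <;> omega
          rw [hmul, hz]
        have h2 : (⟨1, 1⟩ : ℤi).norm = 2 := by simp [Zsqrtd.norm_def]
        rw [h2] at this
        push_cast at this ⊢
        linarith
      · ext <;> simp only [Zsqrtd.re_mul, Zsqrtd.im_mul] <;> omega
    · rintro ⟨w, hw, rfl⟩
      rw [Zsqrtd.norm_mul]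
      have h2 : (⟨1, 1⟩ : ℤi).norm = 2 := by simp [Zsqrtd.norm_def]
      rw [h2, hw]
      push_cast
      ring
  rw [F, F, hkey, ncard_image_mul]
  intro h
  have := congrArg Zsqrtd.re h
  simp at this
lemma dvd_re_im {p : ℕ} (hp : p.Prime) (h3 : p % 4 = 3) {z : ℤi}
    (h : (p : ℤ) ∣ z.norm) : (p : ℤ) ∣ z.re ∧ (p : ℤ) ∣ z.im := by
  haveI : Fact p.Prime := ⟨hp⟩
  have key : ((z.re : ZMod p))^2 + ((z.im : ZMod p))^2 = 0 := by
    have : ((z.norm : ZMod p)) = 0 := by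
      rwa [ZMod.intCast_zmod_eq_zero_iff_dvd]
    rw [norm_eq] at this
    push_cast at this
    rw [← this]; ring
  have him : (z.im : ZMod p) = 0 := by
    by_contra hb
    have hsq : IsSquare (-1 : ZMod p) := by
      refine ⟨(z.re : ZMod p) * ((z.im : ZMod p))⁻¹, ?_⟩
      have hb2 : ((z.im : ZMod p))^2 ≠ 0 := pow_ne_zero _ hb
      field_simp
      linear_combination -key
    rw [ZMod.exists_sq_eq_neg_one_iff] at hsq
    exact hsq h3
  have hre : (z.re : ZMod p) = 0 := by
    rw [him] at key
    have : ((z.re : ZMod p))^2 = 0 := by linear_combination key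
    exact pow_eq_zero_iff (n := 2) (by norm_num) |>.mp this
  exact ⟨(ZMod.intCast_zmod_eq_zero_iff_dvd _ _).mp hre,
    (ZMod.intCast_zmod_eq_zero_iff_dvd _ _).mp him⟩

lemma F_p3_not_dvd {p M : ℕ} (hp : p.Prime) (h3 : p % 4 = 3) (hM : ¬ p ∣ M) :
    F (p * M) = 0 := by
  rw [F]
  convert Set.ncard_empty ℤi
  ext z
  simp only [Set.mem_setOf_eq, Set.mem_empty_iff_false, iff_false]
  intro hz
  have hdvd : (p : ℤ) ∣ z.norm := by rw [hz]; push_cast; exact ⟨M, rfl⟩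
  obtain ⟨hre, him⟩ := dvd_re_im hp h3 hdvd
  obtain ⟨a, ha⟩ := hre
  obtain ⟨b, hb⟩ := him
  have : (p : ℤ) * M = p * p * (a * a + b * b) := by
    have := norm_eq z
    rw [hz, ha, hb] at this
    push_cast at this
    linarith [this]
  have hpM : (p : ℤ) ∣ (M : ℤ) := by
    refine ⟨a * a + b * b, ?_⟩
    have hp0 : (p : ℤ) ≠ 0 := by exact_mod_cast hp.ne_zero
    exact mul_left_cancel₀ hp0 (by linarith)
  exact hM (by exact_mod_cast hpM)

lemma F_p3_sq {p M : ℕ} (hp : p.Prime) (h3 : p % 4 = 3) :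
    F (p ^ 2 * M) = F M := by
  have hkey : {z : ℤi | z.norm = ((p ^ 2 * M : ℕ) : ℤ)} =
      (fun w => ((p : ℤi)) * w) '' {w : ℤi | w.norm = (M : ℤ)} := by
    ext z
    simp only [Set.mem_setOf_eq, Set.mem_image]
    constructor
    · intro hz
      have hdvd : (p : ℤ) ∣ z.norm := by rw [hz]; push_cast; exact ⟨p * M, by ring⟩
      obtain ⟨hre, him⟩ := dvd_re_im hp h3 hdvd
      obtain ⟨a, ha⟩ := hre
      obtain ⟨b, hb⟩ := him
      refine ⟨⟨a, b⟩, ?_, ?_⟩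
      · have hz' := norm_eq z
        rw [hz, ha, hb] at hz'
        have hp0 : (p : ℤ) ≠ 0 := by exact_mod_cast hp.ne_zero
        have : ((p : ℤ))^2 * ((M : ℤ)) = (p : ℤ)^2 * (a * a + b * b) := by push_cast at hz' ⊢; ring_nf; ring_nf at hz'; linarith
        have := mul_left_cancel₀ (pow_ne_zero 2 hp0) this
        rw [norm_eq]
        simp only [this]
      · ext
        · show (((p : ℤi)) * ⟨a, b⟩ : ℤi).re = z.re
          simp [Zsqrtd.re_mul, ha]
        · show (((p : ℤi)) * ⟨a, b⟩ : ℤi).im = z.im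
          simp [Zsqrtd.im_mul, hb]
    · rintro ⟨w, hw, rfl⟩
      rw [Zsqrtd.norm_mul, Zsqrtd.norm_natCast, hw]
      push_cast
      ring
  have hp0 : (p : ℤi) ≠ 0 := by
    intro h0
    have := congrArg Zsqrtd.norm h0
    rw [Zsqrtd.norm_natCast, Zsqrtd.norm_zero] at this
    have : (p : ℤ) = 0 := by nlinarith [this]
    exact hp.ne_zero (by exact_mod_cast this)
  rw [F, F, hkey, ncard_image_mul _ hp0]
lemma prime_of_norm_prime {x : ℤi} (hx : Prime x.norm) : Prime x := by
  rw [← _root_.irreducible_iff_prime]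
  constructor
  · intro hu
    exact hx.not_unit ((Zsqrtd.isUnit_iff_norm_isUnit x).mp hu)
  · intro u v huv
    have : x.norm = u.norm * v.norm := by rw [huv, Zsqrtd.norm_mul]
    rcases hx.irreducible.isUnit_or_isUnit this with h | h
    · exact Or.inl ((Zsqrtd.isUnit_iff_norm_isUnit u).mpr h)
    · exact Or.inr ((Zsqrtd.isUnit_iff_norm_isUnit v).mpr h)

/-- Main inclusion-exclusion step at a prime `p ≡ 1 [MOD 4]`. -/
lemma F_p1 {p : ℕ} (hp : p.Prime) (h1 : p % 4 = 1) (M : ℕ) :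
    F (p * M) + (if p ∣ M then F (M / p) else 0) = 2 * F M := by
  haveI : Fact p.Prime := ⟨hp⟩
  obtain ⟨a, b, hab⟩ := Nat.Prime.sq_add_sq (p := p) (by omega)
  set π : ℤi := ⟨(a : ℤ), (b : ℤ)⟩ with hπ
  have hπnorm : π.norm = (p : ℤ) := by
    rw [norm_eq]
    push_cast [← hab]
    ring
  have hpz : (0 : ℤ) < p := by exact_mod_cast hp.pos
  have hπprime : Prime π := prime_of_norm_prime (by rw [hπnorm]; exact_mod_cast Nat.prime_iff_prime_int.mp hp)
  have hsπprime : Prime (star π) := prime_of_norm_prime (by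
    rw [Zsqrtd.norm_conj, hπnorm]; exact_mod_cast Nat.prime_iff_prime_int.mp hp)
  have hππ : π * star π = ((p : ℕ) : ℤi) := by
    rw [← Zsqrtd.norm_eq_mul_conj, hπnorm]
    push_cast
    rfl
  have hπ0 : π ≠ 0 := hπprime.ne_zero
  have hsπ0 : star π ≠ 0 := hsπprime.ne_zero
  have hp0 : ((p : ℕ) : ℤi) ≠ 0 := by
    rw [← hππ]; exact mul_ne_zero hπ0 hsπ0
  -- π does not divide star π
  have hnd : ¬ π ∣ star π := by
    rintro ⟨u, hu⟩
    have hnu : u.norm = 1 := by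
      have : (star π).norm = π.norm * u.norm := by rw [hu, Zsqrtd.norm_mul]
      rw [Zsqrtd.norm_conj, hπnorm] at this
      nlinarith [this]
    have h1u : u.re * u.re + u.im * u.im = 1 := by rw [← norm_eq, hnu]
    have hure1 : -1 ≤ u.re := by nlinarith [sq_nonneg u.im, sq_nonneg (u.re + 1)]
    have hure2 : u.re ≤ 1 := by nlinarith [sq_nonneg u.im, sq_nonneg (u.re - 1)]
    have huim1 : -1 ≤ u.im := by nlinarith [sq_nonneg u.re, sq_nonneg (u.im + 1)]
    have huim2 : u.im ≤ 1 := by nlinarith [sq_nonneg u.re, sq_nonneg (u.im - 1)]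
    have hre : (star π).re = π.re * u.re - π.im * u.im := by
      rw [hu]; simp [Zsqrtd.re_mul]; try ring
    have him : (star π).im = π.re * u.im + π.im * u.re := by
      rw [hu]; simp [Zsqrtd.im_mul]; try ring
    have hsre : (star π).re = (a : ℤ) := rfl
    have hsim : (star π).im = -(b : ℤ) := rfl
    have hπre : π.re = (a : ℤ) := rfl
    have hπim : π.im = (b : ℤ) := rfl
    rw [hsre, hπre, hπim] at hre
    rw [hsim, hπre, hπim] at him
    have hanneg : (0:ℤ) ≤ (a:ℤ) := Int.natCast_nonneg a
    have hbnneg : (0:ℤ) ≤ (b:ℤ) := Int.natCast_nonneg b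
    have hap : (a:ℤ) * a + b * b = p := by push_cast [← hab]; ring
    have hcontr : ¬ (b = 0 ∨ a = 0 ∨ a = b) := by
      rintro (hb0 | ha0 | hab')
      · subst hb0
        have ha : a ∣ p := ⟨a, by nlinarith [hab]⟩
        rcases (hp.eq_one_or_self_of_dvd a ha) with h | h
        · subst h; nlinarith [hp.two_le]
        · subst h; nlinarith [hp.two_le]
      · subst ha0
        have hb : b ∣ p := ⟨b, by nlinarith [hab]⟩
        rcases (hp.eq_one_or_self_of_dvd b hb) with h | h
        · subst h; nlinarith [hp.two_le]
        · subst h; nlinarith [hp.two_le]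
      · subst hab'
        have : p = 2 * (a * a) := by nlinarith [hab]
        omega
    interval_cases hu1 : u.re <;> interval_cases hu2 : u.im <;>
      first
        | exact hcontr (by norm_num at hre him ⊢; omega)
        | norm_num at h1u
  -- the three sets
  set A : Set ℤi := {z | z.norm = ((p * M : ℕ) : ℤ)} with hA
  set A1 : Set ℤi := (fun w => π * w) '' {w | w.norm = (M : ℤ)} with hA1
  set A2 : Set ℤi := (fun w => (star π) * w) '' {w | w.norm = (M : ℤ)} with hA2
  have hMfin : {w : ℤi | w.norm = (M : ℤ)}.Finite := finite_norm _
  have hA1fin : A1.Finite := hMfin.image _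
  have hA2fin : A2.Finite := hMfin.image _
  have hunion : A1 ∪ A2 = A := by
    ext z
    constructor
    · rintro (⟨w, hw, rfl⟩ | ⟨w, hw, rfl⟩) <;>
      · simp only [hA, Set.mem_setOf_eq, Zsqrtd.norm_mul]
        first
          | rw [hπnorm, hw]
          | rw [Zsqrtd.norm_conj, hπnorm, hw]
        push_cast; ring
    · intro hz
      have hz' : z.norm = ((p * M : ℕ) : ℤ) := hz
      have hdvd : π ∣ z * star z := by
        refine dvd_trans ⟨star π, rfl⟩ ?_
        rw [hππ]
        refine ⟨((M : ℕ) : ℤi), ?_⟩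
        rw [← Zsqrtd.norm_eq_mul_conj, hz']
        push_cast
        rfl
      rcases hπprime.2.2 _ _ hdvd with hd | hd
      · left
        obtain ⟨w, rfl⟩ := hd
        refine ⟨w, ?_, rfl⟩
        have : π.norm * w.norm = ((p:ℤ)) * M := by
          rw [← Zsqrtd.norm_mul, hz']; push_cast; ring
        rw [hπnorm] at this
        exact mul_left_cancel₀ (by exact_mod_cast hp.ne_zero) this
      · right
        obtain ⟨w, hw⟩ := hd
        have hzw : z = star π * star w := by
          have := congrArg star hw
          rwa [star_star, star_mul, mul_comm] at this
        refine ⟨star w, ?_, hzw.symm⟩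
        have : (star π).norm * (star w).norm = ((p:ℤ)) * M := by
          rw [← Zsqrtd.norm_mul, ← hzw, hz']; push_cast; ring
        rw [Zsqrtd.norm_conj, hπnorm] at this
        exact mul_left_cancel₀ (by exact_mod_cast hp.ne_zero) this
  have hAfin : A.Finite := finite_norm _
  have hinter : A1 ∩ A2 = (fun w => ((p:ℕ) : ℤi) * w) '' {w : ℤi | (p : ℤ) * w.norm = (M : ℤ)} := by
    ext z
    constructor
    · rintro ⟨⟨w1, hw1, rfl⟩, ⟨w2, hw2, hw2'⟩⟩
      have hww : star π * w2 = π * w1 := hw2'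
      have hd2 : π ∣ w2 := by
        have hdv : π ∣ star π * w2 := ⟨w1, hww⟩
        rcases hπprime.2.2 _ _ hdv with h | h
        · exact absurd h hnd
        · exact h
      obtain ⟨v, rfl⟩ := hd2
      have hzv : ((p:ℕ) : ℤi) * v = π * w1 := by
        rw [← hππ, show π * star π * v = star π * (π * v) from by ring, hww]
      refine ⟨v, ?_, hzv⟩
      have hn1 : (p:ℤ) * ((p:ℤ) * v.norm) = (p:ℤ) * (M:ℤ) := by
        have := congrArg Zsqrtd.norm hzv
        rw [Zsqrtd.norm_mul, Zsqrtd.norm_mul, Zsqrtd.norm_natCast, hπnorm, hw1] at this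
        linarith [this]
      exact mul_left_cancel₀ (by exact_mod_cast hp.ne_zero) hn1
    · rintro ⟨w, hw, rfl⟩
      have hw' : (p : ℤ) * w.norm = (M : ℤ) := hw
      constructor
      · refine ⟨star π * w, ?_, ?_⟩
        · simp only [Set.mem_setOf_eq, Zsqrtd.norm_mul, Zsqrtd.norm_conj, hπnorm]
          exact hw'
        · rw [← hππ]; ring
      · refine ⟨π * w, ?_, ?_⟩
        · simp only [Set.mem_setOf_eq, Zsqrtd.norm_mul, hπnorm]
          exact hw'
        · rw [← hππ]; ring
  have hcard1 : A1.ncard = F M := ncard_image_mul _ hπ0 _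
  have hcard2 : A2.ncard = F M := ncard_image_mul _ hsπ0 _
  have hie := Set.ncard_union_add_ncard_inter A1 A2 hA1fin hA2fin
  rw [hunion, hcard1, hcard2, hinter] at hie
  have hcardA : A.ncard = F (p * M) := rfl
  have hcardI : ((fun w => ((p:ℕ) : ℤi) * w) '' {w : ℤi | (p : ℤ) * w.norm = (M : ℤ)}).ncard
      = (if p ∣ M then F (M / p) else 0) := by
    by_cases hpM : p ∣ M
    · obtain ⟨M', rfl⟩ := hpM
      have hset : {w : ℤi | (p : ℤ) * w.norm = ((p * M' : ℕ) : ℤ)} = {w : ℤi | w.norm = (M' : ℤ)} := by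
        ext w
        simp only [Set.mem_setOf_eq]
        constructor
        · intro h
          have : (p : ℤ) * w.norm = (p : ℤ) * M' := by push_cast at h ⊢; linarith
          exact mul_left_cancel₀ (by exact_mod_cast hp.ne_zero) this
        · intro h; rw [h]; push_cast; ring
      rw [hset, ncard_image_mul _ hp0, if_pos ⟨M', rfl⟩]
      congr 1
      rw [Nat.mul_div_cancel_left _ hp.pos]
    · rw [if_neg hpM]
      convert Set.ncard_empty ℤi
      rw [Set.image_eq_empty]
      ext w
      simp only [Set.mem_setOf_eq, Set.mem_empty_iff_false, iff_false]
      intro h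
      apply hpM
      have : (p : ℤ) ∣ (M : ℤ) := ⟨w.norm, h.symm⟩
      exact_mod_cast this
  rw [hcardA, hcardI] at hie
  omega

-- prime power values of S
lemma chi_two : chi 2 = 0 := by simp [chi]
lemma chi_p1 {p : ℕ} (h : p % 4 = 1) : chi p = 1 := by simp [chi, h]
lemma chi_p3 {p : ℕ} (h : p % 4 = 3) : chi p = -1 := by simp [chi, h]

lemma S_pow_two (k : ℕ) : S (2 ^ k) = 1 := by
  rw [S_prime_pow Nat.prime_two, chi_two]
  rw [Finset.sum_eq_single 0]
  · simp
  · intro j hj hj0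
    exact zero_pow hj0
  · simp

lemma S_pow_p1 {p : ℕ} (hp : p.Prime) (h1 : p % 4 = 1) (k : ℕ) :
    S (p ^ k) = (k : ℤ) + 1 := by
  rw [S_prime_pow hp, chi_p1 h1]
  simp

lemma S_pow_p3 {p : ℕ} (hp : p.Prime) (h3 : p % 4 = 3) (k : ℕ) :
    S (p ^ k) = if k % 2 = 0 then 1 else 0 := by
  rw [S_prime_pow hp, chi_p3 h3]
  induction k with
  | zero => simp
  | succ k ih =>
    rw [Finset.sum_range_succ, ih]
    rcases Nat.even_or_odd (k + 1) with h | h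
    · rw [(Even.neg_one_pow h : ((-1:ℤ)) ^ (k+1) = 1)]
      have h2 : (k+1) % 2 = 0 := Nat.even_iff.mp h
      have h3' : k % 2 = 1 := by omega
      rw [if_neg (by omega), if_pos h2]
      norm_num
    · rw [(Odd.neg_one_pow h : ((-1:ℤ)) ^ (k+1) = -1)]
      have h2 : (k+1) % 2 = 1 := Nat.odd_iff.mp h
      have h3' : k % 2 = 0 := by omega
      rw [if_pos h3', if_neg (by omega)]
      norm_num

-- prime power recursions for F
lemma F_pow_two (k M : ℕ) : F (2 ^ k * M) = F M := by
  induction k with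
  | zero => simp
  | succ k ih =>
    have : 2 ^ (k+1) * M = 2 * (2 ^ k * M) := by ring
    rw [this, F_two_mul, ih]

lemma F_pow_p3 {p : ℕ} (hp : p.Prime) (h3 : p % 4 = 3) {M : ℕ} (hM : ¬ p ∣ M) (k : ℕ) :
    F (p ^ k * M) = if k % 2 = 0 then F M else 0 := by
  induction k using Nat.twoStepInduction with
  | zero => simp
  | one =>
    rw [pow_one, F_p3_not_dvd hp h3 hM]
    norm_num
  | more k ih _ =>
    have harr : p ^ (k + 2) * M = p ^ 2 * (p ^ k * M) := by ring
    rw [harr, F_p3_sq hp h3, ih]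
    have h22 : (k + 2) % 2 = k % 2 := by omega
    rw [h22]

lemma F_pow_p1 {p : ℕ} (hp : p.Prime) (h1 : p % 4 = 1) {M : ℕ} (hM : ¬ p ∣ M) (k : ℕ) :
    F (p ^ k * M) = (k + 1) * F M := by
  induction k using Nat.twoStepInduction with
  | zero => simp
  | one =>
    have := F_p1 hp h1 M
    rw [if_neg hM] at this
    rw [pow_one]
    omega
  | more k ih ih1 =>
    have hdvd : p ∣ p ^ (k + 1) * M := ⟨p ^ k * M, by ring⟩
    have hdiv : (p ^ (k + 1) * M) / p = p ^ k * M := by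
      rw [show p ^ (k+1) * M = p * (p ^ k * M) from by ring]
      exact Nat.mul_div_cancel_left _ hp.pos
    have hrec := F_p1 hp h1 (p ^ (k + 1) * M)
    rw [if_pos hdvd, hdiv, show p * (p ^ (k+1) * M) = p ^ (k+2) * M from by ring] at hrec
    rw [ih, ih1] at hrec
    have hr : 2 * ((k + 1 + 1) * F M) = (k + 1) * F M + (k + 2 + 1) * F M := by ring
    omega

-- F(1) = 4
lemma F_one : F 1 = 4 := by
  have hset : {z : ℤi | z.norm = ((1:ℕ) : ℤ)} =
      {(⟨1,0⟩ : ℤi), ⟨-1,0⟩, ⟨0,1⟩, ⟨0,-1⟩} := by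
    ext z
    simp only [Set.mem_setOf_eq, Set.mem_insert_iff, Set.mem_singleton_iff]
    constructor
    · intro hz
      have h := norm_eq z
      rw [hz] at h
      push_cast at h
      have hre1 : -1 ≤ z.re := by nlinarith [sq_nonneg z.im, sq_nonneg (z.re + 1)]
      have hre2 : z.re ≤ 1 := by nlinarith [sq_nonneg z.im, sq_nonneg (z.re - 1)]
      have him1 : -1 ≤ z.im := by nlinarith [sq_nonneg z.re, sq_nonneg (z.im + 1)]
      have him2 : z.im ≤ 1 := by nlinarith [sq_nonneg z.re, sq_nonneg (z.im - 1)]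
      have hzz : z = (⟨z.re, z.im⟩ : ℤi) := by ext <;> rfl
      interval_cases h1 : z.re <;> interval_cases h2 : z.im <;>
        first
          | (rw [hzz]; simp [Zsqrtd.ext_iff]; done)
          | (norm_num at h)
    · rintro (rfl | rfl | rfl | rfl) <;> simp [norm_eq]
  rw [F, hset]
  rw [Set.ncard_insert_of_notMem (by norm_num [Zsqrtd.ext_iff]) ((Set.finite_singleton _).insert _ |>.insert _),
     Set.ncard_insert_of_notMem (by norm_num [Zsqrtd.ext_iff]) ((Set.finite_singleton _).insert _),
     Set.ncard_insert_of_notMem (by norm_num [Zsqrtd.ext_iff]) (Set.finite_singleton _),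
     Set.ncard_singleton]

lemma S_one : S 1 = 1 := by simp [S, chi]

-- main counting identity
theorem main : ∀ N : ℕ, 0 < N → (F N : ℤ) = 4 * S N := by
  intro N
  induction N using Nat.strong_induction_on with
  | _ N IH =>
    intro hN
    rcases eq_or_ne N 1 with rfl | hN1
    · rw [F_one, S_one]; norm_num
    · set p := N.minFac with hpdef
      have hp : p.Prime := Nat.minFac_prime hN1
      have hpd : p ∣ N := Nat.minFac_dvd N
      set k := N.factorization p with hk
      set M := N / p ^ k with hMdef
      have hNfact : p ^ k * M = N := Nat.ordProj_mul_ordCompl_eq_self N p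
      have hpM : ¬ p ∣ M := Nat.not_dvd_ordCompl hp hN.ne'
      have hk1 : 1 ≤ k := hp.factorization_pos_of_dvd hN.ne' hpd
      have hM0 : 0 < M := Nat.ordCompl_pos p hN.ne'
      have hpk2 : 2 ≤ p ^ k := le_trans hp.two_le (Nat.le_self_pow (by omega) p)
      have hMN : M < N := by
        have h2M : 2 * M ≤ p ^ k * M := Nat.mul_le_mul_right M hpk2
        exact hNfact ▸ lt_of_lt_of_le (by omega : M < 2 * M) h2M
      have hcop : Nat.Coprime (p ^ k) M := Nat.Coprime.pow_left k (Nat.coprime_ordCompl hp hN.ne')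
      have hSsplit : S N = S (p ^ k) * S M := by rw [← hNfact]; exact S_mult hcop
      have hIH := IH M hMN hM0
      by_cases hp2 : p = 2
      · have hF : F N = F M := by rw [← hNfact, hp2]; exact F_pow_two k M
        have hS2 : S (p ^ k) = 1 := by rw [hp2]; exact S_pow_two k
        rw [hF, hIH, hSsplit, hS2]
        ring
      · have hodd : p % 2 = 1 := Nat.odd_iff.mp (hp.odd_of_ne_two hp2)
        have h14 : p % 4 = 1 ∨ p % 4 = 3 := by omega
        rcases h14 with h1 | h3
        · have hF : F N = (k + 1) * F M := by rw [← hNfact]; exact F_pow_p1 hp h1 hpM k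
          rw [hF, hSsplit, S_pow_p1 hp h1]
          push_cast
          rw [hIH]
          ring
        · have hF : F N = if k % 2 = 0 then F M else 0 := by
            rw [← hNfact]; exact F_pow_p3 hp h3 hpM k
          rw [hF, hSsplit, S_pow_p3 hp h3]
          by_cases hke : k % 2 = 0
          · rw [if_pos hke, if_pos hke, hIH]; ring
          · rw [if_neg hke, if_neg hke]; norm_num

end JacobiTwoSq

/-- Jacobi's two-squares theorem: `r₂(N) = 4(d₁(N) − d₃(N))`. -/
theorem jacobi_two_squares (N : ℕ) (hN : 0 < N) :
    ((((Finset.Icc (-(N : ℤ)) N ×ˢ Finset.Icc (-(N : ℤ)) N).filter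
        (fun p => p.1 ^ 2 + p.2 ^ 2 = (N : ℤ))).card : ℤ)
    = 4 * (((N.divisors.filter (fun d => d % 4 = 1)).card : ℤ)
        - ((N.divisors.filter (fun d => d % 4 = 3)).card : ℤ))) := by
  classical
  -- LHS equals F N
  have hL : (((Finset.Icc (-(N : ℤ)) N ×ˢ Finset.Icc (-(N : ℤ)) N).filter
      (fun p => p.1 ^ 2 + p.2 ^ 2 = (N : ℤ))).card : ℤ) = (JacobiTwoSq.F N : ℤ) := by
    congr 1
    have hset : (((Finset.Icc (-(N : ℤ)) N ×ˢ Finset.Icc (-(N : ℤ)) N).filter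
        (fun p => p.1 ^ 2 + p.2 ^ 2 = (N : ℤ))) : Set (ℤ × ℤ))
        = (fun z : GaussianInt => (z.re, z.im)) '' {z : GaussianInt | z.norm = (N : ℤ)} := by
      ext q
      simp only [Finset.coe_filter, Set.mem_setOf_eq, Finset.mem_product, Finset.mem_Icc,
        Set.mem_image]
      constructor
      · rintro ⟨-, hq⟩
        exact ⟨⟨q.1, q.2⟩, by rw [JacobiTwoSq.norm_eq]; ring_nf; ring_nf at hq; exact hq, rfl⟩
      · rintro ⟨z, hz, rfl⟩
        have h := JacobiTwoSq.norm_eq z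
        rw [hz] at h
        refine ⟨⟨⟨?_, ?_⟩, ?_, ?_⟩, by show z.re ^ 2 + z.im ^ 2 = (N:ℤ); nlinarith [h]⟩ <;>
          nlinarith [sq_nonneg (z.re - 1), sq_nonneg (z.re + 1), sq_nonneg (z.im - 1),
            sq_nonneg (z.im + 1), sq_nonneg z.re, sq_nonneg z.im]
    have hinj : Function.Injective (fun z : GaussianInt => (z.re, z.im)) := by
      intro x y hxy
      ext
      · exact congrArg Prod.fst hxy
      · exact congrArg Prod.snd hxy
    rw [JacobiTwoSq.F, ← Set.ncard_image_of_injective _ hinj, ← hset, Set.ncard_coe_finset]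
  -- RHS: S N equals difference of divisor counts
  have hR : JacobiTwoSq.S N = (((N.divisors.filter (fun d => d % 4 = 1)).card : ℤ)
      - ((N.divisors.filter (fun d => d % 4 = 3)).card : ℤ)) := by
    rw [JacobiTwoSq.S]
    have hchi : ∀ d : ℕ, JacobiTwoSq.chi d
        = (if d % 4 = 1 then (1:ℤ) else 0) - (if d % 4 = 3 then (1:ℤ) else 0) := by
      intro d
      unfold JacobiTwoSq.chi
      split_ifs <;> omega
    rw [Finset.sum_congr rfl (fun d _ => hchi d), Finset.sum_sub_distrib,
      Finset.sum_boole, Finset.sum_boole]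
  rw [hL, JacobiTwoSq.main N hN, hR]
end

section
/- As formal power series in q, the identity ∑_{n≥1} q^{n(n+1)/2}/(1−qⁿ) = ∑_{n≥1} q^{2n−1}/(1−q^{2n−1}) holds. -/
lemma tri_eq_iff (n k N : ℕ) : (n * (n + 1) / 2 + n * k = N) ↔ (2 * N = n * (n + 2 * k + 1)) := by
  have hA : 2 * (n * (n + 1) / 2) = n * (n + 1) :=
    Nat.two_mul_div_two_of_even (Nat.even_mul_succ_self n)
  have h2 : n * (n + 2 * k + 1) = n * (n + 1) + 2 * (n * k) := by ring
  rw [h2]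
  generalize n * (n + 1) = A at hA ⊢
  generalize n * k = B
  omega

/-- Coefficientwise form of `∑_{n≥1} q^{n(n+1)/2}/(1−qⁿ) = ∑_{n≥1} q^{2n−1}/(1−q^{2n−1})`:
for every `N`, the number of pairs `(n,k)` with `n ≥ 1`, `k ≥ 0`, `n(n+1)/2 + nk = N`
equals the number of pairs `(n,k)` with `n ≥ 1`, `k ≥ 0`, `(2n−1)(k+1) = N`. -/
theorem triangular_geometric_identity (N : ℕ) :
    (((Finset.range (N + 1)) ×ˢ (Finset.range (N + 1))).filter
        (fun p => 1 ≤ p.1 ∧ p.1 * (p.1 + 1) / 2 + p.1 * p.2 = N)).card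
    = (((Finset.range (N + 1)) ×ˢ (Finset.range (N + 1))).filter
        (fun p => 1 ≤ p.1 ∧ (2 * p.1 - 1) * (p.2 + 1) = N)).card := by
  apply Finset.card_nbij'
    (i := fun p => if p.1 % 2 = 1 then ((p.1 + 1) / 2, (p.1 + 2 * p.2 + 1) / 2 - 1)
      else (p.1 / 2 + p.2 + 1, p.1 / 2 - 1))
    (j := fun p => if p.1 ≤ p.2 + 1 then (2 * p.1 - 1, p.2 + 1 - p.1)
      else (2 * p.2 + 2, p.1 - p.2 - 2))
  · -- i maps into RHS
    rintro ⟨n, k⟩ hmem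
    simp only [Finset.mem_coe, Finset.mem_filter, Finset.mem_product, Finset.mem_range] at hmem ⊢
    obtain ⟨⟨hn, hk⟩, hn1, heq⟩ := hmem
    have h2N : 2 * N = n * (n + 2 * k + 1) := (tri_eq_iff n k N).1 heq
    by_cases hpar : n % 2 = 1
    · rw [if_pos hpar]
      simp only [Prod.fst, Prod.snd]
      have hc : n + 2 * k + 1 = 2 * ((n + 2 * k + 1) / 2 - 1 + 1) := by omega
      have h2' : 2 * N = 2 * (n * ((n + 2 * k + 1) / 2 - 1 + 1)) := by
        rw [h2N]; nth_rewrite 1 [hc]; ring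
      have hNval : N = n * ((n + 2 * k + 1) / 2 - 1 + 1) := by omega
      have hle : n + 2 * k + 1 ≤ 2 * N := by
        calc n + 2 * k + 1 ≤ n * (n + 2 * k + 1) := Nat.le_mul_of_pos_left _ (by omega)
        _ = 2 * N := h2N.symm
      refine ⟨⟨by omega, by omega⟩, by omega, ?_⟩
      have ha : 2 * ((n + 1) / 2) - 1 = n := by omega
      rw [ha]; exact hNval.symm
    · rw [if_neg hpar]
      simp only [Prod.fst, Prod.snd]
      have hn2 : 2 ≤ n := by omega
      have hc : n = 2 * (n / 2) := by omega
      have hkey : 2 * N = 2 * ((n + 2 * k + 1) * (n / 2)) := by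
        rw [h2N]; nth_rewrite 1 [hc]; ring
      have hNval : N = (n + 2 * k + 1) * (n / 2) := by omega
      have hge : n + 2 * k + 1 ≤ N := by
        calc n + 2 * k + 1 ≤ (n + 2 * k + 1) * (n / 2) :=
          Nat.le_mul_of_pos_right _ (by omega)
        _ = N := hNval.symm
      refine ⟨⟨by omega, by omega⟩, by omega, ?_⟩
      have hb : 2 * (n / 2 + k + 1) - 1 = n + 2 * k + 1 := by omega
      have hb2 : n / 2 - 1 + 1 = n / 2 := by omega
      rw [hb, hb2]; exact hNval.symm
  · -- j maps into LHS
    rintro ⟨a, b⟩ hmem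
    simp only [Finset.mem_coe, Finset.mem_filter, Finset.mem_product, Finset.mem_range] at hmem ⊢
    obtain ⟨⟨ha, hb⟩, ha1, heq⟩ := hmem
    by_cases hle : a ≤ b + 1
    · rw [if_pos hle]
      simp only [Prod.fst, Prod.snd]
      have hNge : 2 * a - 1 ≤ N := by
        calc 2 * a - 1 ≤ (2 * a - 1) * (b + 1) := Nat.le_mul_of_pos_right _ (by omega)
        _ = N := heq
      refine ⟨⟨by omega, by omega⟩, by omega, ?_⟩
      rw [tri_eq_iff]
      have hsub : 2 * a - 1 + 2 * (b + 1 - a) + 1 = 2 * (b + 1) := by omega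
      rw [hsub, ← heq]
      generalize hT : (2 * a - 1) = d
      ring
    · rw [if_neg hle]
      simp only [Prod.fst, Prod.snd]
      have hge : b + 2 ≤ a := by omega
      have hNge : 2 * a - 1 ≤ N := by
        calc 2 * a - 1 ≤ (2 * a - 1) * (b + 1) := Nat.le_mul_of_pos_right _ (by omega)
        _ = N := heq
      refine ⟨⟨by omega, by omega⟩, by omega, ?_⟩
      rw [tri_eq_iff]
      have hsub : 2 * b + 2 + 2 * (a - b - 2) + 1 = 2 * a - 1 := by omega
      rw [hsub, ← heq]
      generalize (2 * a - 1) = d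
      ring
  · -- left inverse
    rintro ⟨n, k⟩ hmem
    simp only [Finset.mem_coe, Finset.mem_filter, Finset.mem_product, Finset.mem_range] at hmem
    obtain ⟨⟨hn, hk⟩, hn1, heq⟩ := hmem
    dsimp only
    by_cases hpar : n % 2 = 1
    · rw [if_pos hpar]
      simp only [Prod.fst, Prod.snd]
      have h1 : (n + 1) / 2 ≤ (n + 2 * k + 1) / 2 - 1 + 1 := by omega
      rw [if_pos h1]
      apply Prod.ext <;> simp <;> omega
    · rw [if_neg hpar]
      simp only [Prod.fst, Prod.snd]
      have hn2 : 2 ≤ n := by omega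
      have h1 : ¬ (n / 2 + k + 1 ≤ n / 2 - 1 + 1) := by omega
      rw [if_neg h1]
      apply Prod.ext <;> simp <;> omega
  · -- right inverse
    rintro ⟨a, b⟩ hmem
    simp only [Finset.mem_coe, Finset.mem_filter, Finset.mem_product, Finset.mem_range] at hmem
    obtain ⟨⟨ha, hb⟩, ha1, heq⟩ := hmem
    dsimp only
    by_cases hle : a ≤ b + 1
    · rw [if_pos hle]
      simp only [Prod.fst, Prod.snd]
      have hpar : (2 * a - 1) % 2 = 1 := by omega
      rw [if_pos hpar]
      apply Prod.ext <;> simp <;> omega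
    · rw [if_neg hle]
      simp only [Prod.fst, Prod.snd]
      have hpar : ¬ ((2 * b + 2) % 2 = 1) := by omega
      rw [if_neg hpar]
      apply Prod.ext <;> simp <;> omega
end

section
/- Define spt̄_ω(n) as the number of smallest parts summed over all overpartitions of n in which the smallest part is overlined and all odd parts are less than twice the smallest part; its generating function is ∑_{n≥1} spt̄_ω(n) qⁿ = ∑_{n≥1} qⁿ (−q^{n+1};q)_n (−q^{2n+2};q²)_∞ / ((1−qⁿ)² (q^{n+1};q)_n (q^{2n+2};q²)_∞). Then spt̄_ω(n) ≡ σ(n) (mod 2), where σ(n) is the sum of divisors of n. -/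
open PowerSeries Finset

/-- The `N`-th coefficient of the generating function
`∑_{n≥1} qⁿ (−q^{n+1};q)_n (−q^{2n+2};q²)_∞ / ((1−qⁿ)² (q^{n+1};q)_n (q^{2n+2};q²)_∞)`.
Since only finitely many factors/terms affect the coefficient of `q^N`, the infinite
products and the infinite sum are truncated (harmlessly) at `N`. -/
noncomputable def sptwBar (N : ℕ) : ℤ :=
  PowerSeries.coeff (R := ℤ) N (∑ n ∈ Finset.Icc 1 N,
    (PowerSeries.X ^ n
      * ∏ j ∈ Finset.Icc 1 n, (1 + PowerSeries.X ^ (n + j))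
      * ∏ j ∈ Finset.range (N + 1), (1 + PowerSeries.X ^ (2 * n + 2 + 2 * j)))
    * Ring.inverse ((1 - PowerSeries.X ^ n) ^ 2
      * ∏ j ∈ Finset.Icc 1 n, (1 - PowerSeries.X ^ (n + j))
      * ∏ j ∈ Finset.range (N + 1), (1 - PowerSeries.X ^ (2 * n + 2 + 2 * j))
      : PowerSeries ℤ))

namespace SptwAux

lemma inverse_eq {R : Type*} [CommRing R] {a b : R} (h : a * b = 1) : Ring.inverse a = b := by
  obtain ⟨u, rfl⟩ := IsUnit.of_mul_eq_one b h
  rw [Ring.inverse_unit]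
  exact Units.inv_eq_of_mul_eq_one_right h

lemma map_inverse {R S : Type*} [CommRing R] [CommRing S] (f : R →+* S) {a : R}
    (h : IsUnit a) : f (Ring.inverse a) = Ring.inverse (f a) := by
  symm
  apply inverse_eq
  rw [← map_mul, Ring.mul_inverse_cancel a h, map_one]

lemma cancel {R : Type*} [CommRing R] {A B : R} (hA : IsUnit A) (hB : IsUnit B) :
    B * Ring.inverse (A * B) = Ring.inverse A := by
  symm
  apply inverse_eq
  rw [← mul_assoc]
  exact Ring.mul_inverse_cancel _ (hA.mul hB)

lemma combine2 {R : Type*} [CommRing R] {x A B g : R} (hA : IsUnit A) (hB : IsUnit B)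
    (hg : Ring.inverse A = g) :
    (x * B) * Ring.inverse (A * B) = x * g := by
  rw [mul_assoc, cancel hA hB, hg]

lemma isUnit_prod' {M : Type*} [CommMonoid M] (s : Finset ℕ) (f : ℕ → M)
    (h : ∀ i ∈ s, IsUnit (f i)) : IsUnit (∏ i ∈ s, f i) :=
  Finset.prod_induction f IsUnit (fun _ _ ha hb => ha.mul hb) isUnit_one h

lemma two_eq_zero : (2 : PowerSeries (ZMod 2)) = 0 := by
  rw [← map_ofNat (C (R := ZMod 2)) 2, show ((2:ZMod 2) = 0) by decide, map_zero]

lemma one_add_pow (k : ℕ) : (1 + X ^ k : PowerSeries (ZMod 2)) = 1 - X ^ k := by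
  have h : (1 + X ^ k) - (1 - X ^ k) = (2 : PowerSeries (ZMod 2)) * X ^ k := by ring
  rw [two_eq_zero, zero_mul, sub_eq_zero] at h
  exact h

lemma isUnit_one_sub {R : Type*} [CommRing R] {k : ℕ} (hk : 0 < k) :
    IsUnit (1 - X ^ k : PowerSeries R) := by
  rw [PowerSeries.isUnit_iff_constantCoeff]
  simp [zero_pow hk.ne']

/-- Inverse of `1 - X^(2n)` over `ZMod 2`. -/
noncomputable def G (n : ℕ) : PowerSeries (ZMod 2) :=
  PowerSeries.mk fun m => if 2 * n ∣ m then 1 else 0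

lemma G_mul (n : ℕ) (hn : 0 < n) : (1 - X ^ (2 * n)) * G n = 1 := by
  have h : (1 - X ^ (2 * n)) * G n = G n - G n * X ^ (2 * n) := by ring
  rw [h]
  ext k
  rw [map_sub, coeff_mul_X_pow', G, coeff_mk, coeff_one]
  rcases Nat.eq_zero_or_pos k with hk | hk
  · subst hk
    have : ¬ (2 * n ≤ 0) := by omega
    simp [this]
  · by_cases hd : 2 * n ∣ k
    · have hle : 2 * n ≤ k := Nat.le_of_dvd hk hd
      have hd2 : 2 * n ∣ k - 2 * n := Nat.dvd_sub hd dvd_rfl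
      simp [hd, hle, hd2, coeff_mk, hk.ne']
    · by_cases hle : 2 * n ≤ k
      · have hd2 : ¬ 2 * n ∣ k - 2 * n := by
          intro h'
          exact hd (by simpa [Nat.sub_add_cancel hle] using Nat.dvd_add h' (dvd_refl (2 * n)))
        simp [hd, hle, hd2, coeff_mk, hk.ne']
      · simp [hd, hle, coeff_mk, hk.ne']

lemma inverse_one_sub (n : ℕ) (hn : 0 < n) :
    Ring.inverse (1 - X ^ (2 * n) : PowerSeries (ZMod 2)) = G n :=
  inverse_eq (G_mul n hn)

lemma sq_eq (n : ℕ) : ((1 - X ^ n) ^ 2 : PowerSeries (ZMod 2)) = 1 - X ^ (2 * n) := by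
  have h : ((1 - X ^ n) ^ 2 : PowerSeries (ZMod 2))
      = 1 - 2 * X ^ n + X ^ n * X ^ n := by ring
  rw [h, ← pow_add, ← two_mul, two_eq_zero, zero_mul, sub_zero]
  exact one_add_pow _

lemma isUnit_inner {R : Type*} [CommRing R] (N n : ℕ) (hn : 0 < n) :
    IsUnit (∏ j ∈ Finset.Icc 1 n, ((1 - X ^ (n + j))
      * ∏ i ∈ Finset.range (N + 1), (1 - X ^ (2 * n + 2 + 2 * i))) : PowerSeries R) := by
  refine isUnit_prod' _ _ fun j hj => IsUnit.mul ?_ ?_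
  · exact isUnit_one_sub (k := n + j) (by simp only [Finset.mem_Icc] at hj; omega)
  · exact isUnit_prod' _ _ fun i _ => isUnit_one_sub (k := 2 * n + 2 + 2 * i) (by omega)

lemma isUnit_den (N n : ℕ) (hn : 0 < n) :
    IsUnit ((1 - X ^ n) ^ 2
      * ∏ j ∈ Finset.Icc 1 n, (1 - X ^ (n + j))
      * ∏ j ∈ Finset.range (N + 1), (1 - X ^ (2 * n + 2 + 2 * j)) : PowerSeries ℤ) :=
  ((isUnit_one_sub hn).pow 2).mul (isUnit_inner N n hn)

lemma term_map (N n : ℕ) (hn : 0 < n) :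
    PowerSeries.map (Int.castRingHom (ZMod 2))
      ((X ^ n
        * ∏ j ∈ Finset.Icc 1 n, (1 + X ^ (n + j))
        * ∏ j ∈ Finset.range (N + 1), (1 + X ^ (2 * n + 2 + 2 * j)))
      * Ring.inverse ((1 - X ^ n) ^ 2
        * ∏ j ∈ Finset.Icc 1 n, (1 - X ^ (n + j))
        * ∏ j ∈ Finset.range (N + 1), (1 - X ^ (2 * n + 2 + 2 * j))
        : PowerSeries ℤ))
    = X ^ n * G n := by
  rw [map_mul, map_inverse _ (isUnit_den N n hn)]
  simp only [map_mul, map_prod, map_pow, map_add, map_sub, map_one, PowerSeries.map_X]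
  simp only [one_add_pow]
  exact combine2 ((isUnit_one_sub hn).pow 2) (isUnit_inner N n hn)
    (by rw [sq_eq, inverse_one_sub n hn])

lemma dvd_iff (N n : ℕ) (h1 : 1 ≤ n) (h2 : n ≤ N) :
    2 * n ∣ N - n ↔ n ∣ N ∧ Odd (N / n) := by
  constructor
  · rintro ⟨k, hk⟩
    obtain ⟨t, ht⟩ : ∃ t, n * k = t := ⟨_, rfl⟩
    have hN : N = n * (2 * k + 1) := by
      have h3 : N - n = 2 * t := by rw [hk, ← ht]; ring
      have hN' : N = 2 * t + n := by omega
      rw [hN', ← ht]; ring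
    refine ⟨⟨2 * k + 1, hN⟩, ?_⟩
    rw [hN, Nat.mul_div_cancel_left _ h1]
    exact ⟨k, by omega⟩
  · rintro ⟨⟨c, hc⟩, hodd⟩
    rw [hc, Nat.mul_div_cancel_left _ h1] at hodd
    obtain ⟨k, hk⟩ := hodd
    obtain ⟨t, ht⟩ : ∃ t, n * k = t := ⟨_, rfl⟩
    refine ⟨k, ?_⟩
    have hN : N = 2 * t + n := by rw [hc, hk, ← ht]; ring
    have h2t : 2 * n * k = 2 * t := by rw [← ht]; ring
    omega

lemma cast_eq_ite (d : ℕ) : ((d : ZMod 2)) = if Odd d then 1 else 0 := by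
  rw [← ZMod.natCast_mod d 2]
  rcases Nat.even_or_odd d with h | h
  · rw [Nat.even_iff.mp h, if_neg (by simpa [Nat.odd_iff] using Nat.even_iff.mp h)]
    simp
  · rw [Nat.odd_iff.mp h, if_pos h]
    simp

end SptwAux

open SptwAux in
/-- `spt̄_ω(n) ≡ σ(n) (mod 2)` for all `n ≥ 1`. -/
theorem sptwBar_congr_sigma (n : ℕ) (hn : 0 < n) :
    sptwBar n ≡ (∑ d ∈ n.divisors, (d : ℤ)) [ZMOD 2] := by
  have key : ((sptwBar n : ℤ) : ZMod 2) = ((∑ d ∈ n.divisors, (d : ℤ) : ℤ) : ZMod 2) := by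
    push_cast
    rw [sptwBar, show ((PowerSeries.coeff (R := ℤ) n _ : ℤ) : ZMod 2) = _ from
      (PowerSeries.coeff_map (Int.castRingHom (ZMod 2)) n _).symm]
    rw [map_sum, Finset.sum_congr rfl fun m hm => term_map n m (by
      simp only [Finset.mem_Icc] at hm; omega)]
    rw [map_sum]
    have hco : ∀ m ∈ Finset.Icc 1 n, (PowerSeries.coeff (R := ZMod 2) n) (X ^ m * G m)
        = if 2 * m ∣ n - m then (1 : ZMod 2) else 0 := by
      intro m hm
      simp only [Finset.mem_Icc] at hm
      rw [mul_comm (X ^ m) (G m), PowerSeries.coeff_mul_X_pow', if_pos hm.2, G, coeff_mk]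
    rw [Finset.sum_congr rfl hco]
    have hstep : ∀ m ∈ Finset.Icc 1 n,
        (if 2 * m ∣ n - m then (1 : ZMod 2) else 0)
        = if m ∣ n then (if Odd (n / m) then (1 : ZMod 2) else 0) else 0 := by
      intro m hm
      simp only [Finset.mem_Icc] at hm
      simp only [dvd_iff n m hm.1 hm.2, ite_and]
    rw [Finset.sum_congr rfl hstep, ← Finset.sum_filter]
    have hdiv : (Finset.Icc 1 n).filter (· ∣ n) = n.divisors := by
      rw [Nat.divisors, ← Finset.Ico_add_one_right_eq_Icc]
    rw [hdiv, Nat.sum_div_divisors n (fun d => if Odd d then (1 : ZMod 2) else 0)]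
    exact Finset.sum_congr rfl fun d _ => (cast_eq_ite d).symm
  have h2 : ((2 : ℕ) : ℤ) = 2 := by norm_num
  rw [← h2]
  exact (ZMod.intCast_eq_intCast_iff _ _ 2).mp key
end

section
/- For every positive integer n, spt̄_ω(n) is odd if and only if n = k² or n = 2k² for some positive integer k. -/
open PowerSeries Finset

noncomputable def geom (b : ℕ) : PowerSeries (ZMod 2) :=
  PowerSeries.mk fun m => if b ∣ m then 1 else 0

lemma one_sub_mul_geom {b : ℕ} (hb : 0 < b) : (1 - X ^ b) * geom b = 1 := by
  ext N
  rw [sub_mul, one_mul, map_sub, PowerSeries.coeff_X_pow_mul']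
  simp only [geom, coeff_mk]
  rcases Nat.eq_zero_or_pos N with rfl | hN
  · simp [hb.ne', Nat.not_le.mpr hb]
  · rw [PowerSeries.coeff_one, if_neg hN.ne']
    by_cases hle : b ≤ N
    · rw [if_pos hle]
      by_cases hd : b ∣ N
      · rw [if_pos hd, if_pos ((Nat.dvd_sub hd dvd_rfl)), sub_self]
      · rw [if_neg hd, if_neg, sub_self]
        intro h
        have := Nat.dvd_add h (dvd_refl b)
        rw [Nat.sub_add_cancel hle] at this
        exact hd this
    · rw [if_neg hle, sub_zero, if_neg]
      exact fun hd => hle (Nat.le_of_dvd hN hd)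

lemma isUnit_one_sub_X_pow {R : Type*} [CommRing R] {b : ℕ} (hb : 0 < b) :
    IsUnit (1 - X ^ b : R⟦X⟧) := by
  rw [PowerSeries.isUnit_iff_constantCoeff]
  simp [zero_pow hb.ne', isUnit_one]

lemma isUnit_one_add_X_pow {R : Type*} [CommRing R] {b : ℕ} (hb : 0 < b) :
    IsUnit (1 + X ^ b : R⟦X⟧) := by
  rw [PowerSeries.isUnit_iff_constantCoeff]
  simp [zero_pow hb.ne', isUnit_one]

lemma inverse_one_sub_X_pow {b : ℕ} (hb : 0 < b) :
    Ring.inverse (1 - X ^ b : (ZMod 2)⟦X⟧) = geom b := by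
  have hu := isUnit_one_sub_X_pow (R := ZMod 2) hb
  have h := one_sub_mul_geom hb
  calc Ring.inverse (1 - X ^ b : (ZMod 2)⟦X⟧)
      = Ring.inverse (1 - X ^ b) * ((1 - X ^ b) * geom b) := by rw [h, mul_one]
    _ = geom b := by rw [← mul_assoc, Ring.inverse_mul_cancel _ hu, one_mul]

lemma map_ringInverse {R S : Type*} [CommRing R] [CommRing S] (f : R →+* S) {a : R}
    (h : IsUnit a) : f (Ring.inverse a) = Ring.inverse (f a) := by
  obtain ⟨u, rfl⟩ := h
  rw [Ring.inverse_unit]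
  have h1 : (f ↑u : S) = ↑(Units.map (f : R →* S) u) := rfl
  have h2 : (f ↑u⁻¹ : S) = ↑(Units.map (f : R →* S) u)⁻¹ := rfl
  rw [h1, h2, Ring.inverse_unit]

instance : CharP ((ZMod 2)⟦X⟧) 2 :=
  charP_of_injective_ringHom (PowerSeries.C_injective) 2


lemma isUnit_finset_prod {M : Type*} [CommMonoid M] (s : Finset ℕ) (f : ℕ → M)
    (h : ∀ i ∈ s, IsUnit (f i)) : IsUnit (∏ i ∈ s, f i) :=
  Finset.prod_induction f IsUnit (fun _ _ => IsUnit.mul) isUnit_one h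

lemma summand_eq (N n : ℕ) (hn : 1 ≤ n) :
    (X ^ n * ∏ j ∈ Icc 1 n, (1 + X ^ (n + j))
      * ∏ j ∈ range (N + 1), (1 + X ^ (2 * n + 2 + 2 * j)))
    * Ring.inverse ((1 - X ^ n) ^ 2
      * ∏ j ∈ Icc 1 n, (1 - X ^ (n + j))
      * ∏ j ∈ range (N + 1), (1 - X ^ (2 * n + 2 + 2 * j)) : (ZMod 2)⟦X⟧)
    = X ^ n * geom (2 * n) := by
  have key : ((1 - X ^ n) ^ 2 : (ZMod 2)⟦X⟧) = 1 - X ^ (2 * n) := by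
    rw [CharTwo.sub_eq_add, CharTwo.add_sq, one_pow, ← pow_mul, mul_comm n 2,
      ← CharTwo.sub_eq_add]
  have hsub : ∀ k : ℕ, (1 - X ^ k : (ZMod 2)⟦X⟧) = 1 + X ^ k := fun k =>
    CharTwo.sub_eq_add 1 (X ^ k)
  have hV : IsUnit (∏ j ∈ Icc 1 n, (1 + X ^ (n + j))
      * ∏ j ∈ range (N + 1), (1 + X ^ (2 * n + 2 + 2 * j)) : (ZMod 2)⟦X⟧) := by
    refine isUnit_finset_prod _ _ fun j hj => IsUnit.mul (isUnit_one_add_X_pow ?_)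
      (isUnit_finset_prod _ _ fun i hi => isUnit_one_add_X_pow ?_) <;> positivity
  have hg : Ring.inverse (1 + X ^ (2 * n) : (ZMod 2)⟦X⟧) = geom (2 * n) := by
    rw [← hsub, inverse_one_sub_X_pow (by positivity)]
  rw [key]
  simp only [hsub]
  rw [Ring.mul_inverse_rev, hg]
  rw [show ∀ a v g : (ZMod 2)⟦X⟧, a * v * (Ring.inverse v * g) = a * g * (v * Ring.inverse v)
      from fun a v g => by ring, Ring.mul_inverse_cancel _ hV, mul_one]

lemma sptwBar_mod2 (N : ℕ) :
    ((sptwBar N : ℤ) : ZMod 2)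
      = ((((Finset.Icc 1 N).filter fun n => 2 * n ∣ N - n).card : ℕ) : ZMod 2) := by
  unfold sptwBar
  show (Int.castRingHom (ZMod 2)) _ = _
  rw [← PowerSeries.coeff_map, map_sum]
  have hmap : ∀ n ∈ Icc 1 N,
      (PowerSeries.map (Int.castRingHom (ZMod 2)))
        ((PowerSeries.X ^ n
          * ∏ j ∈ Finset.Icc 1 n, (1 + PowerSeries.X ^ (n + j))
          * ∏ j ∈ Finset.range (N + 1), (1 + PowerSeries.X ^ (2 * n + 2 + 2 * j)))
        * Ring.inverse ((1 - PowerSeries.X ^ n) ^ 2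
          * ∏ j ∈ Finset.Icc 1 n, (1 - PowerSeries.X ^ (n + j))
          * ∏ j ∈ Finset.range (N + 1), (1 - PowerSeries.X ^ (2 * n + 2 + 2 * j))
          : PowerSeries ℤ))
      = X ^ n * geom (2 * n) := by
    intro n hn
    have hn1 : 1 ≤ n := (Finset.mem_Icc.mp hn).1
    have hu : IsUnit ((1 - PowerSeries.X ^ n) ^ 2
        * ∏ j ∈ Finset.Icc 1 n, (1 - PowerSeries.X ^ (n + j))
        * ∏ j ∈ Finset.range (N + 1), (1 - PowerSeries.X ^ (2 * n + 2 + 2 * j))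
        : PowerSeries ℤ) := by
      refine IsUnit.mul ((isUnit_one_sub_X_pow (by positivity)).pow 2)
        (isUnit_finset_prod _ _ fun j hj => IsUnit.mul (isUnit_one_sub_X_pow ?_)
          (isUnit_finset_prod _ _ fun i hi => isUnit_one_sub_X_pow ?_)) <;> positivity
    rw [map_mul, map_ringInverse _ hu]
    simp only [map_mul, map_pow, map_prod, map_add, map_sub, map_one, PowerSeries.map_X]
    exact summand_eq N n hn1
  rw [Finset.sum_congr rfl hmap, map_sum]
  have hcoeff : ∀ n ∈ Icc 1 N,
      (PowerSeries.coeff (R := ZMod 2) N) (X ^ n * geom (2 * n))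
        = if 2 * n ∣ N - n then 1 else 0 := by
    intro n hn
    obtain ⟨hn1, hn2⟩ := Finset.mem_Icc.mp hn
    rw [PowerSeries.coeff_X_pow_mul', if_pos hn2]
    simp [geom]
  rw [Finset.sum_congr rfl hcoeff, Finset.sum_boole]

lemma odd_finset_prod (s : Finset ℕ) (f : ℕ → ℕ) :
    Odd (∏ i ∈ s, f i) ↔ ∀ i ∈ s, Odd (f i) := by
  classical
  induction s using Finset.induction_on with
  | empty => simp
  | insert _ _ h ih => rw [Finset.prod_insert h]; simp [Nat.odd_mul, ih]

lemma isSquare_iff_even_factorization {m : ℕ} (hm : m ≠ 0) :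
    IsSquare m ↔ ∀ p, Even (m.factorization p) := by
  constructor
  · rintro ⟨r, rfl⟩ p
    have hr : r ≠ 0 := by rintro rfl; simp at hm
    rw [Nat.factorization_mul hr hr]
    exact ⟨r.factorization p, by simp [Finsupp.add_apply]⟩
  · intro h
    refine ⟨m.factorization.prod fun p e => p ^ (e / 2), ?_⟩
    conv_lhs => rw [← Nat.factorization_prod_pow_eq_self hm]
    rw [Finsupp.prod, Finsupp.prod, ← Finset.prod_mul_distrib]
    refine Finset.prod_congr rfl fun p hp => ?_
    rw [← pow_add]
    congr 1
    obtain ⟨c, hc⟩ := h p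
    omega

lemma odd_card_divisors_iff {m : ℕ} (hm : m ≠ 0) :
    Odd m.divisors.card ↔ IsSquare m := by
  rw [Nat.card_divisors hm, odd_finset_prod, isSquare_iff_even_factorization hm]
  constructor
  · intro h p
    by_cases hp : p ∈ m.primeFactors
    · have := h p hp
      rw [Nat.odd_add_one] at this
      exact Nat.not_odd_iff_even.mp this
    · have h0 : m.factorization p = 0 := by
        rwa [← Nat.support_factorization, Finsupp.notMem_support_iff] at hp
      rw [h0]
      exact Even.zero
  · intro h p hp
    rw [Nat.odd_add_one, Nat.not_odd_iff_even]
    exact h p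

lemma card_filter_eq (N : ℕ) (hN : 0 < N) :
    ((Finset.Icc 1 N).filter fun n => 2 * n ∣ N - n).card
      = (N / 2 ^ (N.factorization 2)).divisors.card := by
  set a := N.factorization 2 with ha
  set m := N / 2 ^ a with hm
  have hNne : N ≠ 0 := hN.ne'
  have hm0 : m ≠ 0 := (Nat.ordCompl_pos 2 hNne).ne'
  have hmodd : ¬ 2 ∣ m := Nat.not_dvd_ordCompl Nat.prime_two hNne
  have hNm : 2 ^ a * m = N := Nat.ordProj_mul_ordCompl_eq_self N 2
  -- key characterization of membership in the filter
  have hmem : ∀ n, n ∈ (Finset.Icc 1 N).filter (fun n => 2 * n ∣ N - n) ↔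
      (n ∣ N ∧ ¬ 2 ∣ N / n ∧ n ≠ 0) := by
    intro n
    simp only [Finset.mem_filter, Finset.mem_Icc]
    constructor
    · rintro ⟨⟨h1, h2⟩, t, ht⟩
      have hn0 : n ≠ 0 := by omega
      have hNn : N = n * (2 * t + 1) := by
        have := Nat.sub_add_cancel h2
        nlinarith [Nat.sub_add_cancel h2]
      have hdvd : n ∣ N := ⟨2 * t + 1, hNn⟩
      refine ⟨hdvd, ?_, hn0⟩
      rw [hNn, Nat.mul_div_cancel_left _ (by omega : 0 < n)]
      omega
    · rintro ⟨hdvd, hodd, hn0⟩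
      obtain ⟨q, hq⟩ := hdvd
      have hq0 : q ≠ 0 := by rintro rfl; omega
      have hNq : N / n = q := by rw [hq, Nat.mul_div_cancel_left _ (by omega : 0 < n)]
      rw [hNq] at hodd
      obtain ⟨s, hs⟩ : ∃ s, q = 2 * s + 1 := ⟨q / 2, by omega⟩
      refine ⟨⟨by omega, Nat.le_of_dvd hN ⟨q, hq⟩⟩, s, ?_⟩
      have h3 : N = 2 * (n * s) + n := by rw [hq, hs]; ring
      have h4 : 2 * n * s = 2 * (n * s) := by ring
      omega
  refine Finset.card_bij' (fun n _ => n / 2 ^ a) (fun d _ => d * 2 ^ a) ?_ ?_ ?_ ?_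
  · intro n hn
    rw [hmem] at hn
    obtain ⟨hdvd, hodd, hn0⟩ := hn
    have hfa : n.factorization 2 = a := by
      have hq0 : N / n ≠ 0 := by
        intro h0
        rw [h0] at hodd
        exact hodd ⟨0, rfl⟩
      have h1 : N.factorization = n.factorization + (N / n).factorization := by
        rw [← Nat.factorization_mul hn0 hq0, Nat.mul_div_cancel' hdvd]
      have h1' : a = n.factorization 2 + (N / n).factorization 2 := by
        rw [ha, h1, Finsupp.add_apply]
      have h2 : (N / n).factorization 2 = 0 :=
        Nat.factorization_eq_zero_of_not_dvd hodd
      omega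
    rw [Nat.mem_divisors]
    refine ⟨?_, hm0⟩
    have : n / 2 ^ (n.factorization 2) ∣ m := by
      simpa [hm, ha] using Nat.ordCompl_dvd_ordCompl_of_dvd hdvd 2
    rwa [hfa] at this
  · intro d hd
    rw [Nat.mem_divisors] at hd
    obtain ⟨hdvd, _⟩ := hd
    have hd0 : d ≠ 0 := by rintro rfl; exact hm0 (Nat.eq_zero_of_zero_dvd hdvd)
    rw [hmem]
    have hdN : d * 2 ^ a ∣ N := by
      rw [← hNm, mul_comm (2 ^ a) m]
      exact Nat.mul_dvd_mul hdvd dvd_rfl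
    refine ⟨hdN, ?_, by positivity⟩
    have : N / (d * 2 ^ a) = m / d := by
      rw [← hNm, mul_comm (2 ^ a) m, Nat.mul_div_mul_right _ _ (by positivity)]
    rw [this]
    intro h2
    exact hmodd (h2.trans (Nat.div_dvd_of_dvd hdvd))
  · intro n hn
    rw [hmem] at hn
    obtain ⟨hdvd, hodd, hn0⟩ := hn
    have hfa : n.factorization 2 = a := by
      have hq0 : N / n ≠ 0 := by
        intro h0
        rw [h0] at hodd
        exact hodd ⟨0, rfl⟩
      have h1 : N.factorization = n.factorization + (N / n).factorization := by
        rw [← Nat.factorization_mul hn0 hq0, Nat.mul_div_cancel' hdvd]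
      have h1' : a = n.factorization 2 + (N / n).factorization 2 := by
        rw [ha, h1, Finsupp.add_apply]
      have h2 : (N / n).factorization 2 = 0 :=
        Nat.factorization_eq_zero_of_not_dvd hodd
      omega
    show n / 2 ^ a * 2 ^ a = n
    rw [← hfa]
    exact Nat.div_mul_cancel (Nat.ordProj_dvd n 2)
  · intro d hd
    show d * 2 ^ a / 2 ^ a = d
    rw [Nat.mul_div_cancel _ (by positivity : (0:ℕ) < 2 ^ a)]

lemma isSquare_ordCompl_iff (N : ℕ) (hN : 0 < N) :
    IsSquare (N / 2 ^ (N.factorization 2))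
      ↔ ∃ k : ℕ, 0 < k ∧ (N = k ^ 2 ∨ N = 2 * k ^ 2) := by
  set a := N.factorization 2 with ha
  set m := N / 2 ^ a with hm
  have hNne : N ≠ 0 := hN.ne'
  have hm0 : m ≠ 0 := (Nat.ordCompl_pos 2 hNne).ne'
  have hNm : 2 ^ a * m = N := Nat.ordProj_mul_ordCompl_eq_self N 2
  constructor
  · rintro ⟨r, hr⟩
    have hr0 : 0 < r := by
      rcases Nat.eq_zero_or_pos r with rfl | h
      · simp at hr; omega
      · exact h
    rcases Nat.even_or_odd a with ⟨c, hc⟩ | ⟨c, hc⟩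
    · exact ⟨2 ^ c * r, by positivity, Or.inl (by rw [← hNm, hr, hc]; ring)⟩
    · exact ⟨2 ^ c * r, by positivity, Or.inr (by rw [← hNm, hr, hc]; ring)⟩
  · rintro ⟨k, hk, hN2 | hN2⟩
    · refine ⟨k / 2 ^ (k.factorization 2), ?_⟩
      rw [hm, ha, hN2, pow_two, Nat.ordCompl_mul]
    · refine ⟨k / 2 ^ (k.factorization 2), ?_⟩
      rw [hm, ha, hN2, pow_two, ← mul_assoc, Nat.ordCompl_mul, Nat.ordCompl_mul]
      have h2 : 2 / 2 ^ (Nat.factorization 2) 2 = 1 := by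
        have : (Nat.factorization 2) 2 = 1 := Nat.Prime.factorization_self Nat.prime_two
        rw [this]; rfl
      rw [h2, one_mul]


/-- `spt̄_ω(n)` is odd iff `n = k²` or `n = 2k²` for some positive integer `k`. -/
theorem sptwBar_odd_iff (n : ℕ) (hn : 0 < n) :
    Odd (sptwBar n) ↔ ∃ k : ℕ, 0 < k ∧ (n = k ^ 2 ∨ n = 2 * k ^ 2) := by
  have hm0 : n / 2 ^ (n.factorization 2) ≠ 0 := (Nat.ordCompl_pos 2 hn.ne').ne'
  have h1 : Odd (sptwBar n) ↔ ((sptwBar n : ℤ) : ZMod 2) = 1 := by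
    rw [Int.odd_iff, show (1 : ZMod 2) = ((1 : ℤ) : ZMod 2) by norm_num,
      ZMod.intCast_eq_intCast_iff, Int.ModEq]
    norm_num
  have h2 : ((((Finset.Icc 1 n).filter fun i => 2 * i ∣ n - i).card : ℕ) : ZMod 2) = 1
      ↔ Odd ((Finset.Icc 1 n).filter fun i => 2 * i ∣ n - i).card := by
    rw [Nat.odd_iff, show (1 : ZMod 2) = ((1 : ℕ) : ZMod 2) by norm_num,
      ZMod.natCast_eq_natCast_iff, Nat.ModEq]
  rw [h1, sptwBar_mod2 n, h2, card_filter_eq n hn, odd_card_divisors_iff hm0,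
    isSquare_ordCompl_iff n hn]
end

section
/- If m is a positive integer and a is an indeterminate, then ∑_{j=0}^{m} [m choose j]_q (−a;q)_j (−a;q)_{m−j} (−1)^j equals (q;q²)_n (a²;q²)_n if m = 2n is even, and equals 0 if m is odd. -/
open Polynomial Finset

/-- The Gaussian (q-binomial) polynomial `[n choose k]_q = (q;q)_n/((q;q)_k (q;q)_{n-k})`,
defined via the standard Pascal-type recurrence
`[n+1 choose k+1]_q = [n choose k]_q + q^{k+1} [n choose k+1]_q`. -/
noncomputable def gaussBinom : ℕ → ℕ → Polynomial ℤ
  | _, 0 => 1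
  | 0, _ + 1 => 0
  | n + 1, k + 1 => gaussBinom n k + Polynomial.X ^ (k + 1) * gaussBinom n (k + 1)

lemma gb_zero (n : ℕ) : gaussBinom n 0 = 1 := by cases n <;> rfl

lemma gb_succ (n k : ℕ) :
    gaussBinom (n+1) (k+1) = gaussBinom n k + X ^ (k+1) * gaussBinom n (k+1) := rfl

lemma gb_eq_zero : ∀ n k : ℕ, n < k → gaussBinom n k = 0 := by
  intro n
  induction n with
  | zero => intro k h; cases k with
    | zero => omega
    | succ k => rfl
  | succ n ih =>
    intro k h
    cases k with
    | zero => omega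
    | succ k => rw [gb_succ, ih k (by omega), ih (k+1) (by omega)]; ring

lemma gb_diag : ∀ n : ℕ, gaussBinom n n = 1 := by
  intro n
  induction n with
  | zero => rfl
  | succ n ih => rw [gb_succ, ih, gb_eq_zero n (n+1) (by omega)]; ring

noncomputable def qpoch (k : ℕ) : Polynomial ℤ := ∏ i ∈ Finset.range k, (1 - X ^ (i+1))

lemma qpoch_succ (k : ℕ) : qpoch (k+1) = qpoch k * (1 - X ^ (k+1)) := prod_range_succ _ _

lemma qpoch_ne_zero (k : ℕ) : qpoch k ≠ 0 := by
  apply prod_ne_zero_iff.mpr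
  intro i _
  intro h
  have := congrArg (fun p => Polynomial.coeff p 0) h
  simp [coeff_X_pow] at this

lemma gb_formula : ∀ n k : ℕ, k ≤ n →
    gaussBinom n k * qpoch k * qpoch (n - k) = qpoch n := by
  intro n
  induction n with
  | zero => intro k h; interval_cases k; simp [gb_zero, qpoch]
  | succ n ih =>
    intro k h
    cases k with
    | zero => simp [gb_zero, qpoch]
    | succ k =>
      rcases eq_or_lt_of_le h with h1 | h1
      · rw [← h1]; simp [gb_diag, qpoch]
      · have hk : k ≤ n := by omega
        have hk' : k + 1 ≤ n := by omega
        have e2 : n - (k+1) + 1 = n - k := by omega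
        have e3 : n + 1 - (k+1) = n - k := by omega
        have hq := qpoch_succ (n - (k+1))
        rw [e2] at hq
        have hx : (X : Polynomial ℤ)^(k+1) * X^(n-k) = X^(n+1) := by
          rw [← pow_add]; congr 1; omega
        have i1 := ih k hk
        rw [hq] at i1
        have i2 := ih (k+1) hk'
        rw [qpoch_succ k] at i2
        rw [gb_succ, e3, qpoch_succ k, hq, qpoch_succ n]
        linear_combination (1 - X^(k+1)) * i1 + (X^(k+1) * (1 - X^(n-k))) * i2 - qpoch n * hx

lemma lemA (n k : ℕ) :
    (1 - X^(k+1)) * gaussBinom (n+1) (k+1) = (1 - (X : Polynomial ℤ)^(n+1)) * gaussBinom n k := by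
  rcases le_or_gt k n with h | h
  · apply mul_right_cancel₀ (mul_ne_zero (qpoch_ne_zero k) (qpoch_ne_zero (n-k)))
    have f1 := gb_formula (n+1) (k+1) (by omega)
    have f2 := gb_formula n k h
    have e : n + 1 - (k+1) = n - k := by omega
    rw [e, qpoch_succ k] at f1
    rw [qpoch_succ n] at f1
    linear_combination f1 - (1 - X^(n+1)) * f2
  · rw [gb_eq_zero (n+1) (k+1) (by omega), gb_eq_zero n k h]; ring

lemma lemB (n k : ℕ) (h : k ≤ n + 1) :
    (1 - X^(n+1-k)) * gaussBinom (n+1) k = (1 - (X : Polynomial ℤ)^(n+1)) * gaussBinom n k := by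
  rcases eq_or_lt_of_le h with h1 | h1
  · subst h1
    rw [gb_eq_zero n (n+1) (by omega)]
    simp
  · have hk : k ≤ n := by omega
    apply mul_right_cancel₀ (mul_ne_zero (qpoch_ne_zero k) (qpoch_ne_zero (n-k)))
    have f1 := gb_formula (n+1) k (by omega)
    have f2 := gb_formula n k hk
    have e : n + 1 - k = n - k + 1 := by omega
    have e2 : n - k + 1 = n + 1 - k := by omega
    rw [e, qpoch_succ (n-k), e2] at f1
    rw [qpoch_succ n] at f1
    linear_combination f1 - (1 - X^(n+1)) * f2

noncomputable def PP (j : ℕ) : Polynomial (Polynomial ℤ) :=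
  ∏ i ∈ Finset.range j, (1 + X * (C X)^i)

lemma PP_succ (j : ℕ) : PP (j+1) = PP j * (1 + X * (C X)^j) := prod_range_succ _ _

noncomputable def Tf (m j : ℕ) : Polynomial (Polynomial ℤ) :=
  (-1)^j * C (gaussBinom m j) * PP j * PP (m - j)

noncomputable def SS (m : ℕ) : Polynomial (Polynomial ℤ) :=
  ∑ j ∈ Finset.range (m+1), Tf m j

noncomputable def Uf (m j : ℕ) : Polynomial (Polynomial ℤ) :=
  (-1)^(j+1) * C (gaussBinom (m+1) j) * PP (j+1) * PP (m+1-j)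

noncomputable def Wf (m j : ℕ) : Polynomial (Polynomial ℤ) :=
  (-1)^j * (C (X : Polynomial ℤ))^j * C (gaussBinom (m+1) j) * PP j * PP (m+2-j)

noncomputable def Af (m j : ℕ) : Polynomial (Polynomial ℤ) :=
  (-1)^(j+1) * C ((1 - X^j) * gaussBinom (m+1) j) * PP j * PP (m+1-j)

noncomputable def Bf (m j : ℕ) : Polynomial (Polynomial ℤ) :=
  (-1)^(j+1) * X * (C (X : Polynomial ℤ))^j * C ((1 - X^(m+1-j)) * gaussBinom (m+1) j) * PP j * PP (m+1-j)

lemma SS_rec (m : ℕ) :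
    SS (m+2) = (1 - (C X)^(m+1)) * (1 - X^2 * (C X)^m) * SS m := by
  have h2 : ∀ j ∈ Finset.range (m+2), Tf (m+2) (j+1) = Uf m j + Wf m (j+1) := by
    intro j hj
    unfold Tf Uf Wf
    have e : m+2-(j+1) = m+1-j := by omega
    rw [e, show m+2 = m+1+1 from rfl, gb_succ]
    simp only [map_add, map_mul, map_pow]
    ring
  have h3 : Tf (m+2) 0 = Wf m 0 := by
    unfold Tf Wf; rw [gb_zero, gb_zero]; simp
  have h6 : ∀ j ∈ Finset.range (m+2), Uf m j + Wf m j = Af m j + Bf m j := by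
    intro j hj
    have hj' : j ≤ m+1 := by simp at hj; omega
    unfold Uf Wf Af Bf
    rw [show m+2-j = (m+1-j)+1 from by omega, PP_succ, PP_succ]
    simp only [map_mul, map_sub, map_pow, map_one]
    ring
  have hW2 : Wf m (m+2) = 0 := by
    unfold Wf; rw [gb_eq_zero (m+1) (m+2) (by omega)]; simp
  have hA0 : Af m 0 = 0 := by unfold Af; simp
  have hB1 : Bf m (m+1) = 0 := by
    unfold Bf; rw [show m+1-(m+1) = 0 from by omega]; simp
  have h8 : ∀ j ∈ Finset.range (m+1),
      Af m (j+1) + Bf m j = (1 - (C X)^(m+1)) * (1 - X^2 * (C X)^m) * Tf m j := by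
    intro j hj
    have hj' : j ≤ m := by simp at hj; omega
    have hpow : (C (X : Polynomial ℤ))^j * (C (X : Polynomial ℤ))^(m-j)
        = (C (X : Polynomial ℤ))^m := by
      rw [← pow_add]; congr 1; omega
    unfold Af Bf Tf
    rw [show m+1-(j+1) = m-j from by omega]
    rw [lemA m j, lemB m j (by omega)]
    rw [show m+1-j = (m-j)+1 from by omega]
    rw [PP_succ, PP_succ]
    simp only [map_mul, map_sub, map_pow, map_one]
    linear_combination ((-1 : Polynomial (Polynomial ℤ)))^j * C (gaussBinom m j) * PP j * PP (m-j) * (1 - (C (X : Polynomial ℤ))^(m+1)) * (-(X^2)) * hpow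
  calc SS (m+2) = ∑ j ∈ Finset.range (m+2), Tf (m+2) (j+1) + Tf (m+2) 0 :=
        Finset.sum_range_succ' _ _
    _ = ∑ j ∈ Finset.range (m+2), (Uf m j + Wf m (j+1)) + Wf m 0 := by
        rw [Finset.sum_congr rfl h2, h3]
    _ = ∑ j ∈ Finset.range (m+2), Uf m j + (∑ j ∈ Finset.range (m+2), Wf m (j+1) + Wf m 0) := by
        rw [Finset.sum_add_distrib]; ring
    _ = ∑ j ∈ Finset.range (m+2), Uf m j + ∑ j ∈ Finset.range (m+3), Wf m j := by
        rw [Finset.sum_range_succ' (Wf m) (m+2)]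
    _ = ∑ j ∈ Finset.range (m+2), Uf m j + (∑ j ∈ Finset.range (m+2), Wf m j + Wf m (m+2)) := by
        rw [Finset.sum_range_succ (Wf m) (m+2)]
    _ = ∑ j ∈ Finset.range (m+2), (Uf m j + Wf m j) := by
        rw [hW2, add_zero, Finset.sum_add_distrib]
    _ = ∑ j ∈ Finset.range (m+2), (Af m j + Bf m j) := Finset.sum_congr rfl h6
    _ = ∑ j ∈ Finset.range (m+2), Af m j + ∑ j ∈ Finset.range (m+2), Bf m j :=
        Finset.sum_add_distrib
    _ = (∑ j ∈ Finset.range (m+1), Af m (j+1) + Af m 0)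
        + (∑ j ∈ Finset.range (m+1), Bf m j + Bf m (m+1)) := by
        rw [Finset.sum_range_succ' (Af m) (m+1), Finset.sum_range_succ (Bf m) (m+1)]
    _ = ∑ j ∈ Finset.range (m+1), (Af m (j+1) + Bf m j) := by
        rw [hA0, hB1, add_zero, add_zero, Finset.sum_add_distrib]
    _ = ∑ j ∈ Finset.range (m+1), (1 - (C X)^(m+1)) * (1 - X^2 * (C X)^m) * Tf m j :=
        Finset.sum_congr rfl h8
    _ = (1 - (C X)^(m+1)) * (1 - X^2 * (C X)^m) * SS m := by
        rw [SS, ← Finset.mul_sum]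


lemma SS_even (n : ℕ) : SS (2*n)
    = (∏ i ∈ Finset.range n, (1 - (C (X : Polynomial ℤ))^(2*i+1)))
      * (∏ i ∈ Finset.range n, (1 - X^2 * (C X)^(2*i))) := by
  induction n with
  | zero => simp [SS, Tf, PP, gb_zero]
  | succ n ih =>
    rw [show 2*(n+1) = 2*n+2 from by omega, SS_rec, ih,
        Finset.prod_range_succ, Finset.prod_range_succ]
    ring

lemma SS_odd (k : ℕ) : SS (2*k+1) = 0 := by
  induction k with
  | zero =>
    show ∑ j ∈ Finset.range 2, Tf 1 j = 0
    rw [Finset.sum_range_succ, Finset.sum_range_one]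
    unfold Tf
    rw [gb_zero, gb_diag]
    ring
  | succ k ih =>
    rw [show 2*(k+1)+1 = (2*k+1)+2 from by omega, SS_rec, ih, mul_zero]


/-- In `ℤ[q][a]` (with `a` the outer variable and `q` the inner one),
`∑_{j=0}^{m} [m choose j]_q (−a;q)_j (−a;q)_{m−j} (−1)^j` equals
`(q;q²)_n (a²;q²)_n` if `m = 2n`, and `0` if `m` is odd. -/
theorem gauss_sum_neg_a_pochhammer (m n : ℕ) :
    (m = 2 * n →
      (∑ j ∈ Finset.range (m + 1), (-1 : Polynomial (Polynomial ℤ)) ^ j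
          * Polynomial.C (gaussBinom m j)
          * (∏ i ∈ Finset.range j,
              (1 + Polynomial.X * (Polynomial.C Polynomial.X) ^ i))
          * (∏ i ∈ Finset.range (m - j),
              (1 + Polynomial.X * (Polynomial.C Polynomial.X) ^ i)))
        = (∏ i ∈ Finset.range n,
              (1 - (Polynomial.C Polynomial.X : Polynomial (Polynomial ℤ)) ^ (2 * i + 1)))
          * (∏ i ∈ Finset.range n,
              (1 - Polynomial.X ^ 2 * (Polynomial.C Polynomial.X) ^ (2 * i))))
    ∧ (Odd m →
      (∑ j ∈ Finset.range (m + 1), (-1 : Polynomial (Polynomial ℤ)) ^ j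
          * Polynomial.C (gaussBinom m j)
          * (∏ i ∈ Finset.range j,
              (1 + Polynomial.X * (Polynomial.C Polynomial.X) ^ i))
          * (∏ i ∈ Finset.range (m - j),
              (1 + Polynomial.X * (Polynomial.C Polynomial.X) ^ i)))
        = 0) := by
  constructor
  · intro hm
    subst hm
    have h := SS_even n
    simp only [SS, Tf, PP] at h
    exact h
  · intro hodd
    obtain ⟨k, hk⟩ := hodd
    subst hk
    have h := SS_odd k
    simp only [SS, Tf, PP] at h
    exact h
end

section
/- In the formal power series ring ℤ[[q]], (q;q)_∞² ≡ (−q;q)_∞² (mod 4), i.e., every coefficient of ∏_{n≥1}(1−qⁿ)² − ∏_{n≥1}(1+qⁿ)² is divisible by 4. -/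
open PowerSeries Finset

lemma euler_prod_diff_even (s : Finset ℕ) :
    ∃ C : PowerSeries ℤ,
      (∏ n ∈ s, (1 - PowerSeries.X ^ n : PowerSeries ℤ))
        - (∏ n ∈ s, (1 + PowerSeries.X ^ n : PowerSeries ℤ)) = 2 * C := by
  induction s using Finset.cons_induction with
  | empty => exact ⟨0, by simp⟩
  | cons a s ha ih =>
    obtain ⟨C, hC⟩ := ih
    refine ⟨(1 - PowerSeries.X ^ a) * C
      - PowerSeries.X ^ a * ∏ n ∈ s, (1 + PowerSeries.X ^ n : PowerSeries ℤ), ?_⟩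
    rw [Finset.prod_cons, Finset.prod_cons]
    linear_combination (1 - PowerSeries.X ^ a : PowerSeries ℤ) * hC

/-- `(q;q)_∞² ≡ (−q;q)_∞² (mod 4)` in `ℤ[[q]]`: every coefficient of
`∏_{n≥1}(1−qⁿ)² − ∏_{n≥1}(1+qⁿ)²` is divisible by `4`.  (The coefficient of `q^N`
is unaffected by factors with `n > N`, so the products are truncated at `N`.) -/
theorem euler_product_sq_congr_mod_four (N : ℕ) :
    (4 : ℤ) ∣ PowerSeries.coeff (R := ℤ) N
      ((∏ n ∈ Finset.Icc 1 N, (1 - PowerSeries.X ^ n)) ^ 2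
        - (∏ n ∈ Finset.Icc 1 N, (1 + PowerSeries.X ^ n)) ^ 2) := by
  obtain ⟨C, hC⟩ := euler_prod_diff_even (Finset.Icc 1 N)
  have h4 : (∏ n ∈ Finset.Icc 1 N, (1 - PowerSeries.X ^ n : PowerSeries ℤ)) ^ 2
      - (∏ n ∈ Finset.Icc 1 N, (1 + PowerSeries.X ^ n : PowerSeries ℤ)) ^ 2
      = PowerSeries.C (R := ℤ) 4
        * ((C + ∏ n ∈ Finset.Icc 1 N, (1 + PowerSeries.X ^ n : PowerSeries ℤ)) * C) := by
    have h : (PowerSeries.C (R := ℤ) 4 : PowerSeries ℤ) = 4 := by simp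
    rw [h]
    linear_combination ((∏ n ∈ Finset.Icc 1 N, (1 - PowerSeries.X ^ n : PowerSeries ℤ))
      + (∏ n ∈ Finset.Icc 1 N, (1 + PowerSeries.X ^ n : PowerSeries ℤ)) + 2 * C) * hC
  rw [h4, PowerSeries.coeff_C_mul]
  exact dvd_mul_right 4 _
end

section
/- As formal power series (Clausen's identity), ∑_{n≥1} d(n) qⁿ = ∑_{n≥1} q^{n²} (1+qⁿ)/(1−qⁿ), where d(n) is the number of positive divisors of n. -/
private lemma clausen_pairs (N : ℕ) (hN : 0 < N) :
    (((Finset.range (N + 1)) ×ˢ (Finset.range (N + 1))).filter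
      (fun p => 1 ≤ p.1 ∧ 1 ≤ p.2 ∧ p.1 ^ 2 + p.1 * p.2 = N)).card
    = (N.divisors.filter (fun d => d ^ 2 < N)).card := by
  apply Finset.card_nbij' (fun p => p.1) (fun d => (d, N / d - d))
  · intro p hp
    simp only [Finset.mem_coe, Finset.mem_filter, Finset.mem_product, Finset.mem_range] at hp
    obtain ⟨⟨-, -⟩, h1, h2, h3⟩ := hp
    simp only [Finset.mem_coe, Finset.mem_filter, Nat.mem_divisors]
    refine ⟨⟨⟨p.1 + p.2, by rw [← h3]; ring⟩, hN.ne'⟩, by nlinarith⟩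
  · intro d hd
    simp only [Finset.mem_coe, Finset.mem_filter, Nat.mem_divisors] at hd
    obtain ⟨⟨hdvd, -⟩, hlt⟩ := hd
    have hdpos : 0 < d := Nat.pos_of_dvd_of_pos hdvd hN
    obtain ⟨e, he⟩ := hdvd
    have hq : N / d = e := by rw [he]; exact Nat.mul_div_cancel_left e hdpos
    have hde : d < e := by nlinarith
    have heN : e ≤ N := by nlinarith
    simp only [Finset.mem_coe, Finset.mem_filter, Finset.mem_product, Finset.mem_range, hq]
    have h' : e - d + d = e := by omega
    have h2 : d * (e - d) + d * d = d * e := by rw [← Nat.mul_add, h']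
    refine ⟨⟨by omega, by omega⟩, by omega, by omega, ?_⟩
    rw [pow_two, he]
    linarith
  · intro p hp
    simp only [Finset.mem_coe, Finset.mem_filter, Finset.mem_product, Finset.mem_range] at hp
    obtain ⟨⟨-, -⟩, h1, h2, h3⟩ := hp
    have hdvd : N / p.1 = p.1 + p.2 := by
      rw [← h3]
      have : p.1 ^ 2 + p.1 * p.2 = p.1 * (p.1 + p.2) := by ring
      rw [this, Nat.mul_div_cancel_left _ (by omega)]
    have hsub : p.1 + p.2 - p.1 = p.2 := by omega
    simp only [hdvd, hsub]
  · intro d hd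
    rfl

private lemma clausen_AB (N : ℕ) (hN : 0 < N) :
    (N.divisors.filter (fun d => d ^ 2 < N)).card
    = (N.divisors.filter (fun d => N < d ^ 2)).card := by
  apply Finset.card_nbij' (fun d => N / d) (fun d => N / d)
  · intro d hd
    simp only [Finset.mem_coe, Finset.mem_filter, Nat.mem_divisors] at hd ⊢
    obtain ⟨⟨hdvd, -⟩, hlt⟩ := hd
    have hdpos : 0 < d := Nat.pos_of_dvd_of_pos hdvd hN
    obtain ⟨e, he⟩ := hdvd
    have hq : N / d = e := by rw [he]; exact Nat.mul_div_cancel_left e hdpos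
    rw [hq]
    have hde : d < e := by nlinarith
    exact ⟨⟨⟨d, by rw [he]; ring⟩, hN.ne'⟩, by nlinarith⟩
  · intro d hd
    simp only [Finset.mem_coe, Finset.mem_filter, Nat.mem_divisors] at hd ⊢
    obtain ⟨⟨hdvd, -⟩, hlt⟩ := hd
    have hdpos : 0 < d := Nat.pos_of_dvd_of_pos hdvd hN
    obtain ⟨e, he⟩ := hdvd
    have hq : N / d = e := by rw [he]; exact Nat.mul_div_cancel_left e hdpos
    rw [hq]
    have hde : e < d := by nlinarith
    have hepos : 0 < e := by nlinarith
    exact ⟨⟨⟨d, by rw [he]; ring⟩, hN.ne'⟩, by nlinarith⟩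
  · intro d hd
    simp only [Finset.mem_coe, Finset.mem_filter, Nat.mem_divisors] at hd
    exact Nat.div_div_self hd.1.1 hN.ne'
  · intro d hd
    simp only [Finset.mem_coe, Finset.mem_filter, Nat.mem_divisors] at hd
    exact Nat.div_div_self hd.1.1 hN.ne'

private lemma clausen_C (N : ℕ) (hN : 0 < N) :
    (N.divisors.filter (fun d => d ^ 2 = N)).card
    = ((Finset.range (N + 1)).filter (fun k => 1 ≤ k ∧ k ^ 2 = N)).card := by
  congr 1
  ext k
  simp only [Finset.mem_filter, Finset.mem_range, Nat.mem_divisors]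
  constructor
  · rintro ⟨⟨hdvd, -⟩, hsq⟩
    have := Nat.le_of_dvd hN hdvd
    have := Nat.pos_of_dvd_of_pos hdvd hN
    exact ⟨by omega, by omega, hsq⟩
  · rintro ⟨-, hk, hsq⟩
    exact ⟨⟨⟨k, by rw [← hsq]; ring⟩, hN.ne'⟩, hsq⟩

private lemma clausen_split (N : ℕ) (hN : 0 < N) :
    N.divisors.card = (N.divisors.filter (fun d => d ^ 2 < N)).card
      + ((N.divisors.filter (fun d => N < d ^ 2)).card
        + (N.divisors.filter (fun d => d ^ 2 = N)).card) := by
  have h1 := Finset.card_filter_add_card_filter_not (s := N.divisors)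
    (p := fun d => d ^ 2 < N)
  have hunion : N.divisors.filter (fun d => ¬ d ^ 2 < N)
      = N.divisors.filter (fun d => N < d ^ 2) ∪ N.divisors.filter (fun d => d ^ 2 = N) := by
    ext d
    simp only [Finset.mem_filter, Finset.mem_union]
    constructor
    · rintro ⟨hd, h⟩
      rcases lt_or_eq_of_le (not_lt.mp h) with h' | h'
      · exact Or.inl ⟨hd, h'⟩
      · exact Or.inr ⟨hd, h'.symm⟩
    · rintro (⟨hd, h⟩ | ⟨hd, h⟩) <;> exact ⟨hd, by omega⟩
  have hdisj : Disjoint (N.divisors.filter (fun d => N < d ^ 2))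
      (N.divisors.filter (fun d => d ^ 2 = N)) := by
    rw [Finset.disjoint_left]
    intro d hdB hdC
    simp only [Finset.mem_filter] at hdB hdC
    omega
  rw [hunion, Finset.card_union_of_disjoint hdisj] at h1
  omega

/-- Clausen's identity `∑ d(n) qⁿ = ∑ q^{n²}(1+qⁿ)/(1−qⁿ)`, coefficientwise: for `N ≥ 1`,
`d(N) = #{n ≥ 1 : n² = N} + 2·#{(n,k) : n,k ≥ 1, n² + nk = N}`. -/
theorem clausen_identity (N : ℕ) (hN : 0 < N) :
    N.divisors.card
      = ((Finset.range (N + 1)).filter (fun k => 1 ≤ k ∧ k ^ 2 = N)).card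
        + 2 * (((Finset.range (N + 1)) ×ˢ (Finset.range (N + 1))).filter
            (fun p => 1 ≤ p.1 ∧ 1 ≤ p.2 ∧ p.1 ^ 2 + p.1 * p.2 = N)).card := by
  rw [clausen_split N hN, clausen_pairs N hN, ← clausen_C N hN, ← clausen_AB N hN]
  ring
end

section
/- As formal power series, ∑_{n≥0} (−1)ⁿ q^{2n+1}/(1−q^{2n+1}) = T(q) + T(q)², where T(q) = ∑_{n≥1} q^{n²}. Equivalently, for each N ≥ 1, d₁(N) − d₃(N) equals the number of ways to write N as a sum of one or two positive squares counted appropriately: #{k≥1 : k²=N} + #{(a,b) : a,b≥1, a²+b²=N}. -/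
open GaussianInt Zsqrtd Finset
namespace Fine


/-- The canonical "first quadrant" associate of a Gaussian integer. -/
def quadRep (z : GaussianInt) : GaussianInt :=
  if 0 < z.re ∧ 0 ≤ z.im then z
  else if 0 < z.im ∧ z.re ≤ 0 then ⟨z.im, -z.re⟩
  else if z.re < 0 ∧ z.im ≤ 0 then ⟨-z.re, -z.im⟩
  else ⟨-z.im, z.re⟩

lemma ne_zero_iff {z : GaussianInt} : z ≠ 0 ↔ ¬(z.re = 0 ∧ z.im = 0) := by
  constructor
  · intro h hc; exact h (Zsqrtd.ext hc.1 hc.2)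
  · intro h hc; exact h (by rw [hc]; exact ⟨rfl, rfl⟩)

lemma quadRep_mem {z : GaussianInt} (h : z ≠ 0) :
    0 < (quadRep z).re ∧ 0 ≤ (quadRep z).im := by
  rw [ne_zero_iff] at h
  unfold quadRep
  split_ifs <;> constructor <;> (try dsimp only) <;> omega

lemma quadRep_eq_self {z : GaussianInt} (h1 : 0 < z.re) (h2 : 0 ≤ z.im) : quadRep z = z := by
  unfold quadRep; rw [if_pos ⟨h1, h2⟩]

lemma norm_quadRep (z : GaussianInt) : (quadRep z).norm = z.norm := by
  unfold quadRep
  split_ifs <;> simp [Zsqrtd.norm_def] <;> ring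

lemma i_mul (z : GaussianInt) : (⟨0,1⟩ : GaussianInt) * z = ⟨-z.im, z.re⟩ := by
  apply Zsqrtd.ext <;> simp [Zsqrtd.re_mul, Zsqrtd.im_mul]

lemma quadRep_i_mul (z : GaussianInt) : quadRep ((⟨0,1⟩ : GaussianInt) * z) = quadRep z := by
  rw [i_mul]
  unfold quadRep
  dsimp only
  split_ifs <;> (apply Zsqrtd.ext <;> dsimp only <;> omega)






lemma isUnit_iff {u : GaussianInt} :
    IsUnit u ↔ u = 1 ∨ u = -1 ∨ u = ⟨0,1⟩ ∨ u = ⟨0,-1⟩ := by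
  constructor
  · intro h
    have h1 : u.norm.natAbs = 1 := Zsqrtd.norm_eq_one_iff.2 h
    have h2 : u.re.natAbs * u.re.natAbs + u.im.natAbs * u.im.natAbs = 1 := by
      rw [← GaussianInt.natAbs_norm_eq]; exact h1
    have ha : u.re.natAbs ≤ 1 := by nlinarith
    have hb : u.im.natAbs ≤ 1 := by nlinarith
    have key : (u.re = 1 ∧ u.im = 0) ∨ (u.re = -1 ∧ u.im = 0) ∨
        (u.re = 0 ∧ u.im = 1) ∨ (u.re = 0 ∧ u.im = -1) := by
      interval_cases h3 : u.re.natAbs <;> interval_cases h4 : u.im.natAbs <;> omega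
    rcases key with ⟨h3, h4⟩ | ⟨h3, h4⟩ | ⟨h3, h4⟩ | ⟨h3, h4⟩
    · exact Or.inl (Zsqrtd.ext (by simp [h3]) (by simp [h4]))
    · exact Or.inr (Or.inl (Zsqrtd.ext (by simp [h3]) (by simp [h4])))
    · exact Or.inr (Or.inr (Or.inl (Zsqrtd.ext (by simp [h3]) (by simp [h4]))))
    · exact Or.inr (Or.inr (Or.inr (Zsqrtd.ext (by simp [h3]) (by simp [h4]))))
  · rintro (rfl | rfl | rfl | rfl)
    · exact isUnit_one
    · exact IsUnit.neg isUnit_one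
    · exact Zsqrtd.norm_eq_one_iff.1 (by decide)
    · exact Zsqrtd.norm_eq_one_iff.1 (by decide)




-- chunk c
lemma neg_eq_i_mul_i_mul (z : GaussianInt) : -z = ⟨0,1⟩ * (⟨0,1⟩ * z) := by
  rw [i_mul, i_mul]; exact Zsqrtd.ext (by simp) (by simp)

lemma quadRep_unit_mul {u : GaussianInt} (hu : IsUnit u) (z : GaussianInt) :
    quadRep (u * z) = quadRep z := by
  rcases isUnit_iff.1 hu with rfl | rfl | rfl | rfl
  · rw [one_mul]
  · have : (-1 : GaussianInt) * z = ⟨0,1⟩ * (⟨0,1⟩ * z) := by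
      rw [neg_one_mul]; exact neg_eq_i_mul_i_mul z
    rw [this, quadRep_i_mul, quadRep_i_mul]
  · exact quadRep_i_mul z
  · have : (⟨0,-1⟩ : GaussianInt) * z = ⟨0,1⟩ * (⟨0,1⟩ * (⟨0,1⟩ * z)) := by
      rw [i_mul, i_mul, i_mul]
      exact Zsqrtd.ext (by simp [Zsqrtd.re_mul, Zsqrtd.im_mul]) (by simp [Zsqrtd.re_mul, Zsqrtd.im_mul])
    rw [this, quadRep_i_mul, quadRep_i_mul, quadRep_i_mul]

lemma associated_quadRep (z : GaussianInt) : Associated z (quadRep z) := by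
  have h : ∃ u : GaussianInt, IsUnit u ∧ u * z = quadRep z := by
    unfold quadRep
    split_ifs
    · exact ⟨1, isUnit_one, one_mul z⟩
    · refine ⟨⟨0,-1⟩, isUnit_iff.2 (by tauto), ?_⟩
      exact Zsqrtd.ext (by simp [Zsqrtd.re_mul, Zsqrtd.im_mul]) (by simp [Zsqrtd.re_mul, Zsqrtd.im_mul])
    · refine ⟨-1, (isUnit_one).neg, ?_⟩
      exact Zsqrtd.ext (by simp) (by simp)
    · refine ⟨⟨0,1⟩, isUnit_iff.2 (by tauto), ?_⟩
      exact Zsqrtd.ext (by simp [Zsqrtd.re_mul, Zsqrtd.im_mul]) (by simp [Zsqrtd.re_mul, Zsqrtd.im_mul])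
  obtain ⟨u, hu, huz⟩ := h
  exact ⟨hu.unit, by rw [IsUnit.unit_spec, mul_comm, huz]⟩

lemma quadRep_eq_of_associated {z w : GaussianInt} (h : Associated z w) :
    quadRep z = quadRep w := by
  obtain ⟨u, rfl⟩ := h
  rw [mul_comm, quadRep_unit_mul u.isUnit]

-- chunk d : norm helpers, primes, key divisibility lemmas

lemma norm_dvd_of_dvd {z w : GaussianInt} (h : z ∣ w) : z.norm ∣ w.norm := by
  obtain ⟨t, rfl⟩ := h; rw [Zsqrtd.norm_mul]; exact dvd_mul_right _ _

lemma isUnit_of_norm_one {z : GaussianInt} (h : z.norm = 1) : IsUnit z :=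
  Zsqrtd.norm_eq_one_iff.1 (by rw [h]; rfl)

lemma natAbs_norm_isUnit {z : GaussianInt} (h : IsUnit z) : z.norm.natAbs = 1 :=
  Zsqrtd.norm_eq_one_iff.2 h

lemma associated_of_dvd_norm_eq {z w : GaussianInt} (hzw : z ∣ w)
    (h : z.norm = w.norm) (hw : w ≠ 0) : Associated z w := by
  obtain ⟨t, rfl⟩ := hzw
  have hz : z ≠ 0 := by rintro rfl; simp at hw
  have hn : z.norm ≠ 0 := fun hc => hz (GaussianInt.norm_eq_zero.1 hc)
  rw [Zsqrtd.norm_mul] at h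
  have ht : t.norm = 1 := by
    have := mul_left_cancel₀ hn (show z.norm * 1 = z.norm * t.norm by rw [mul_one]; exact h)
    exact this.symm
  have hu : IsUnit t := isUnit_of_norm_one ht
  exact ⟨hu.unit, by rw [IsUnit.unit_spec]⟩

lemma prime_of_norm_prime {p : ℕ} (hp : p.Prime) {z : GaussianInt}
    (h : z.norm = (p : ℤ)) : Prime z := by
  have hirr : Irreducible z := by
    constructor
    · intro hu
      have := natAbs_norm_isUnit hu
      rw [h, Int.natAbs_natCast] at this
      exact hp.ne_one this
    · intro a b hab
      have hnn : a.norm.natAbs * b.norm.natAbs = p := by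
        have : z.norm = a.norm * b.norm := by rw [hab, Zsqrtd.norm_mul]
        rw [h] at this
        have := congrArg Int.natAbs this.symm
        rwa [Int.natAbs_mul, Int.natAbs_natCast] at this
      rcases (hp.eq_one_or_self_of_dvd a.norm.natAbs ⟨b.norm.natAbs, hnn.symm⟩) with h1 | h1
      · exact Or.inl (Zsqrtd.norm_eq_one_iff.1 h1)
      · refine Or.inr (Zsqrtd.norm_eq_one_iff.1 ?_)
        have hp0 : 0 < p := hp.pos
        rw [h1] at hnn
        have : b.norm.natAbs = 1 := by
          nlinarith [hnn]
        exact this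
  exact hirr.prime

lemma z_dvd_norm (z : GaussianInt) : z ∣ ((z.norm : ℤ) : GaussianInt) :=
  ⟨star z, Zsqrtd.norm_eq_mul_conj z⟩
-- chunk e : key divisibility lemma

lemma cast_ne_zero_of_pos {m : ℕ} (h : 0 < m) : ((m : ℤ)) ≠ 0 := by
  exact_mod_cast Nat.pos_iff_ne_zero.1 h

lemma ne_zero_of_norm_nat {x : GaussianInt} {m : ℕ} (hx : x.norm = (m : ℤ))
    (hm : 0 < m) : x ≠ 0 := by
  intro hc
  rw [hc, Zsqrtd.norm_zero] at hx
  exact cast_ne_zero_of_pos hm hx.symm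

lemma not_isUnit_of_norm_nat {x : GaussianInt} {m : ℕ} (hx : x.norm = (m : ℤ))
    (hm : m ≠ 1) : ¬IsUnit x := by
  intro h
  have := natAbs_norm_isUnit h
  rw [hx, Int.natAbs_natCast] at this
  exact hm this

lemma dvd_of_dvd_mul_of_norm_coprime :
    ∀ m : ℕ, ∀ (x z w : GaussianInt) (n : ℕ), Nat.Coprime m n →
      x.norm = (m : ℤ) → w.norm = (n : ℤ) → x ∣ z * w → x ∣ z := by
  intro m
  induction m using Nat.strong_induction_on with
  | _ m IH =>
    intro x z w n hmn hx hw hdvd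
    rcases Nat.lt_or_ge m 2 with hm2 | hm2
    · interval_cases m
      · -- m = 0
        have hx0 : x = 0 := GaussianInt.norm_eq_zero.1 (by rw [hx]; rfl)
        have hn1 : n = 1 := (Nat.coprime_zero_left n).1 hmn
        have hw0 : w ≠ 0 := ne_zero_of_norm_nat hw (by omega)
        have hzw : z * w = 0 := by rw [hx0] at hdvd; exact zero_dvd_iff.1 hdvd
        rcases mul_eq_zero.1 hzw with h | h
        · rw [hx0, h]
        · exact absurd h hw0
      · -- m = 1
        exact (isUnit_of_norm_one (by rw [hx]; rfl)).dvd
    · -- m ≥ 2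
      have hx0 : x ≠ 0 := ne_zero_of_norm_nat hx (by omega)
      have hxu : ¬IsUnit x := not_isUnit_of_norm_nat hx (by omega)
      obtain ⟨π, hπirr, hπx⟩ := WfDvdMonoid.exists_irreducible_factor hxu hx0
      have hπ : Prime π := hπirr.prime
      set k := π.norm.natAbs with hkdef
      have hknorm : ((k : ℕ) : ℤ) = π.norm := GaussianInt.abs_natCast_norm π
      have hkm : k ∣ m := by
        have h1 : π.norm ∣ (m : ℤ) := hx ▸ norm_dvd_of_dvd hπx
        rw [← hknorm] at h1
        exact_mod_cast h1
      have hk1 : k ≠ 1 := by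
        intro hc
        exact hπ.not_unit (isUnit_of_norm_one (by rw [← hknorm, hc]; rfl))
      have hk0 : k ≠ 0 := by
        intro hc
        have : π.norm = 0 := by rw [← hknorm, hc]; rfl
        exact hπ.ne_zero (GaussianInt.norm_eq_zero.1 this)
      rcases hπ.2.2 _ _ (dvd_trans hπx hdvd) with hz | hw'
      · -- π ∣ z
        obtain ⟨z₁, rfl⟩ := hz
        obtain ⟨x₁, rfl⟩ := hπx
        set m₁ := x₁.norm.natAbs with hm₁def
        have hm₁norm : ((m₁ : ℕ) : ℤ) = x₁.norm := GaussianInt.abs_natCast_norm x₁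
        have hkm₁ : k * m₁ = m := by
          have : π.norm * x₁.norm = (m : ℤ) := by rw [← Zsqrtd.norm_mul]; exact hx
          rw [← hknorm, ← hm₁norm] at this
          exact_mod_cast this
        have hm₁0 : m₁ ≠ 0 := by intro hc; rw [hc, Nat.mul_zero] at hkm₁; omega
        have hm₁m : m₁ < m := by
          rw [← hkm₁]
          have hk2 : 2 ≤ k := by omega
          nlinarith [Nat.pos_of_ne_zero hm₁0, hk2]
        have hcop : Nat.Coprime m₁ n :=
          Nat.Coprime.coprime_dvd_left ⟨k, by rw [← hkm₁, mul_comm]⟩ hmn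
        have hx₁dvd : x₁ ∣ z₁ * w := by
          have h2 : π * x₁ ∣ π * (z₁ * w) := by rwa [← mul_assoc]
          exact (mul_dvd_mul_iff_left hπ.ne_zero).1 h2
        exact mul_dvd_mul_left π (IH m₁ hm₁m x₁ z₁ w n hcop hm₁norm.symm hw hx₁dvd)
      · -- π ∣ w : impossible
        exfalso
        have h1 : π.norm ∣ (n : ℤ) := hw ▸ norm_dvd_of_dvd hw'
        rw [← hknorm] at h1
        have h2 : k ∣ n := by exact_mod_cast h1
        have := Nat.dvd_gcd hkm h2
        rw [Nat.Coprime.gcd_eq_one hmn] at this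
        exact hk1 (Nat.dvd_one.1 this)

-- chunk f : existence of factorization

lemma dvd_of_dvd_star {p : ℕ} {z : GaussianInt} (h : (p : GaussianInt) ∣ star z) :
    (p : GaussianInt) ∣ z := by
  obtain ⟨t, ht⟩ := h
  refine ⟨star t, ?_⟩
  have := congrArg star ht
  rwa [star_star, star_mul', star_natCast] at this

lemma star_dvd_of_dvd_star {ρ z : GaussianInt} (h : ρ ∣ star z) : star ρ ∣ z := by
  obtain ⟨t, ht⟩ := h
  refine ⟨star t, ?_⟩
  have := congrArg star ht
  rwa [star_star, star_mul'] at this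

lemma mul_conj_eq {z : GaussianInt} {N : ℕ} (h : z.norm = (N : ℤ)) :
    (N : GaussianInt) = z * star z := by
  have := Zsqrtd.norm_eq_mul_conj z
  rw [h] at this
  exact_mod_cast this

lemma exists_factorization :
    ∀ m n : ℕ, Nat.Coprime m n → ∀ z : GaussianInt, z.norm = ((m * n : ℕ) : ℤ) →
      ∃ u v : GaussianInt, z = u * v ∧ u.norm = (m : ℤ) ∧ v.norm = (n : ℤ) := by
  intro m
  induction m using Nat.strong_induction_on with
  | _ m IH =>
    intro n hmn z hz
    rcases Nat.lt_or_ge m 2 with hm2 | hm2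
    · interval_cases m
      · -- m = 0
        have hn1 : n = 1 := (Nat.coprime_zero_left n).1 hmn
        refine ⟨0, 1, ?_, by simp, by simp [hn1]⟩
        have : z = 0 := GaussianInt.norm_eq_zero.1 (by rw [hz]; simp)
        simp [this]
      · -- m = 1
        exact ⟨1, z, (one_mul z).symm, by simp, by rw [hz]; simp⟩
    · -- m ≥ 2
      set p := m.minFac with hpdef
      have hp : p.Prime := Nat.minFac_prime (by omega)
      haveI : Fact p.Prime := ⟨hp⟩
      have hpm : p ∣ m := Nat.minFac_dvd m
      have hpn : Nat.Coprime p n := Nat.Coprime.coprime_dvd_left hpm hmn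
      have hp2 : 2 ≤ p := hp.two_le
      have hzz : ((m * n : ℕ) : GaussianInt) = z * star z := mul_conj_eq hz
      have hdvdmn : (p : GaussianInt) ∣ ((m * n : ℕ) : GaussianInt) :=
        Nat.cast_dvd_cast (hpm.mul_right n)
      by_cases hp3 : p % 4 = 3
      · -- p is a Gaussian prime
        have hπ : Prime ((p : ℕ) : GaussianInt) :=
          (GaussianInt.prime_iff_mod_four_eq_three_of_nat_prime p).2 hp3
        have hdvd : (p : GaussianInt) ∣ z * star z := by rw [← hzz]; exact hdvdmn
        have hpz : (p : GaussianInt) ∣ z := by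
          rcases hπ.2.2 _ _ hdvd with h | h
          · exact h
          · exact dvd_of_dvd_star h
        obtain ⟨z₁, rfl⟩ := hpz
        have hnorm : ((p * p : ℕ) : ℤ) * z₁.norm = ((m * n : ℕ) : ℤ) := by
          rw [← hz, Zsqrtd.norm_mul, Zsqrtd.norm_natCast]
          push_cast
          ring
        set k := z₁.norm.natAbs with hkdef
        have hknorm : ((k : ℕ) : ℤ) = z₁.norm := GaussianInt.abs_natCast_norm z₁
        have hkeq : p * p * k = m * n := by
          rw [← hknorm] at hnorm
          exact_mod_cast hnorm
        have hppm : p * p ∣ m := by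
          refine Nat.Coprime.dvd_of_dvd_mul_right (Nat.Coprime.mul hpn hpn) ?_
          exact ⟨k, hkeq.symm⟩
        obtain ⟨m₁, hm₁⟩ := hppm
        have hkm₁n : k = m₁ * n := by
          have h4 : p * p * k = p * p * (m₁ * n) := by
            rw [hkeq, hm₁]; ring
          exact Nat.eq_of_mul_eq_mul_left (by positivity) h4
        have hm₁m : m₁ < m := by
          have hm₁0 : m₁ ≠ 0 := by rintro rfl; omega
          rw [hm₁]
          nlinarith [Nat.pos_of_ne_zero hm₁0, hp2, Nat.mul_le_mul hp2 hp2]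
        have hcop : Nat.Coprime m₁ n :=
          Nat.Coprime.coprime_dvd_left ⟨p * p, by rw [hm₁]; ring⟩ hmn
        obtain ⟨u₁, v, huv, hu₁, hv⟩ := IH m₁ hm₁m n hcop z₁
          (by rw [← hknorm]; exact_mod_cast congrArg (Nat.cast : ℕ → ℤ) hkm₁n)
        refine ⟨(p : GaussianInt) * u₁, v, by rw [huv, mul_assoc], ?_, hv⟩
        rw [Zsqrtd.norm_mul, Zsqrtd.norm_natCast, hu₁, hm₁]
        push_cast
        ring
      · -- p = ρ * star ρ splits
        obtain ⟨a, b, hab⟩ := Nat.Prime.sq_add_sq (p := p) hp3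
        set ρ : GaussianInt := ⟨(a : ℤ), (b : ℤ)⟩ with hρdef
        have hρn : ρ.norm = (p : ℤ) := by
          rw [Zsqrtd.norm_def, ← hab]
          push_cast
          ring
        have hρ : Prime ρ := prime_of_norm_prime hp hρn
        have hρp : ρ ∣ (p : GaussianInt) := ⟨star ρ, mul_conj_eq hρn⟩
        have hdvd : ρ ∣ z * star z := by
          rw [← hzz]; exact hρp.trans hdvdmn
        have key : ∃ σ : GaussianInt, σ.norm = (p : ℤ) ∧ σ ∣ z := by
          rcases hρ.2.2 _ _ hdvd with h | h
          · exact ⟨ρ, hρn, h⟩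
          · exact ⟨star ρ, by rw [Zsqrtd.norm_conj]; exact hρn, star_dvd_of_dvd_star h⟩
        obtain ⟨σ, hσn, hσz⟩ := key
        obtain ⟨z₁, rfl⟩ := hσz
        have hnorm : (p : ℤ) * z₁.norm = ((m * n : ℕ) : ℤ) := by
          rw [← hz, Zsqrtd.norm_mul, hσn]
        set k := z₁.norm.natAbs with hkdef
        have hknorm : ((k : ℕ) : ℤ) = z₁.norm := GaussianInt.abs_natCast_norm z₁
        have hkeq : p * k = m * n := by
          rw [← hknorm] at hnorm
          exact_mod_cast hnorm
        obtain ⟨m₁, hm₁⟩ := hpm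
        have hkm₁n : k = m₁ * n := by
          have h4 : p * k = p * (m₁ * n) := by rw [hkeq, hm₁]; ring
          exact Nat.eq_of_mul_eq_mul_left (by omega) h4
        have hm₁m : m₁ < m := by
          have hm₁0 : m₁ ≠ 0 := by rintro rfl; omega
          rw [hm₁]
          nlinarith [Nat.pos_of_ne_zero hm₁0, hp2]
        have hcop : Nat.Coprime m₁ n :=
          Nat.Coprime.coprime_dvd_left ⟨p, by rw [hm₁]; ring⟩ hmn
        obtain ⟨u₁, v, huv, hu₁, hv⟩ := IH m₁ hm₁m n hcop z₁
          (by rw [← hknorm]; exact_mod_cast congrArg (Nat.cast : ℕ → ℤ) hkm₁n)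
        refine ⟨σ * u₁, v, by rw [huv, mul_assoc], ?_, hv⟩
        rw [Zsqrtd.norm_mul, hσn, hu₁, hm₁]
        push_cast
        ring

-- chunk g : prime power structure

lemma norm_pow (z : GaussianInt) (n : ℕ) : (z ^ n).norm = z.norm ^ n := by
  induction n with
  | zero => simp
  | succ n ih => rw [pow_succ, pow_succ, Zsqrtd.norm_mul, ih]

lemma dvd_mul_prime_pow {π π' : GaussianInt} (hπ : Prime π) (hπ' : Prime π') :
    ∀ (a b : ℕ) (z : GaussianInt), z ∣ π ^ a * π' ^ b →
      ∃ i ≤ a, ∃ j ≤ b, Associated z (π ^ i * π' ^ j) := by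
  intro a
  induction a with
  | zero =>
    intro b z hz
    rw [pow_zero, one_mul] at hz
    obtain ⟨j, hj, hassoc⟩ := (dvd_prime_pow hπ' b).1 hz
    exact ⟨0, le_rfl, j, hj, by rw [pow_zero, one_mul]; exact hassoc⟩
  | succ a ih =>
    intro b z hz
    by_cases hdvd : π ∣ z
    · obtain ⟨z₁, rfl⟩ := hdvd
      have hz₁ : z₁ ∣ π ^ a * π' ^ b := by
        have h2 : π * z₁ ∣ π * (π ^ a * π' ^ b) := by
          rw [← mul_assoc, ← pow_succ']; exact hz
        exact (mul_dvd_mul_iff_left hπ.ne_zero).1 h2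
      obtain ⟨i, hi, j, hj, hassoc⟩ := ih b z₁ hz₁
      refine ⟨i + 1, by omega, j, hj, ?_⟩
      have h3 := Associated.mul_left π hassoc
      rwa [← mul_assoc, ← pow_succ'] at h3
    · have hcop : IsCoprime (π ^ (a + 1)) z := ((hπ.coprime_iff_not_dvd).2 hdvd).pow_left
      have hz' : z ∣ π' ^ b := hcop.symm.dvd_of_dvd_mul_left hz
      obtain ⟨j, hj, hassoc⟩ := (dvd_prime_pow hπ' b).1 hz'
      exact ⟨0, by omega, j, hj, by rw [pow_zero, one_mul]; exact hassoc⟩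

lemma not_associated_of_exp_lt {π π' : GaussianInt} (hπ : Prime π) (hπ' : Prime π')
    (hna : ¬Associated π π') {i j i' j' : ℕ} (h : i < i') :
    ¬Associated (π ^ i * π' ^ j) (π ^ i' * π' ^ j') := by
  intro hass
  obtain ⟨u, hu⟩ := hass
  have h1 : π ^ (i + 1) ∣ π ^ i' := pow_dvd_pow π (by omega)
  have h2 : π ^ (i + 1) ∣ π ^ i * (π' ^ j * (u : GaussianInt)) := by
    rw [← mul_assoc, hu]
    exact h1.trans (dvd_mul_right _ _)
  rw [pow_succ] at h2
  have h3 : π ∣ π' ^ j * (u : GaussianInt) :=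
    (mul_dvd_mul_iff_left (pow_ne_zero i hπ.ne_zero)).1 h2
  rcases hπ.2.2 _ _ h3 with h4 | h4
  · exact hna (hπ.irreducible.associated_of_dvd hπ'.irreducible (hπ.dvd_of_dvd_pow h4))
  · exact hπ.not_unit (isUnit_of_dvd_unit h4 u.isUnit)

lemma exp_eq_of_associated {π π' : GaussianInt} (hπ : Prime π) (hπ' : Prime π')
    (hna : ¬Associated π π') {i j i' j' : ℕ}
    (h : Associated (π ^ i * π' ^ j) (π ^ i' * π' ^ j')) : i = i' := by
  rcases lt_trichotomy i i' with hlt | heq | hgt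
  · exact absurd h (not_associated_of_exp_lt hπ hπ' hna hlt)
  · exact heq
  · exact absurd h.symm (not_associated_of_exp_lt hπ hπ' hna hgt)

lemma not_prime_sq {p n : ℕ} (hp : p.Prime) : n * n ≠ p := by
  intro h
  rcases hp.eq_one_or_self_of_dvd n ⟨n, h.symm⟩ with h1 | h1
  · rw [h1] at h; simp at h; exact hp.ne_one h.symm
  · rw [h1] at h
    have : p * p = p * 1 := by rw [h, mul_one]
    have := Nat.eq_of_mul_eq_mul_left hp.pos this
    exact hp.ne_one this

lemma not_associated_star {ρ : GaussianInt} {p : ℕ} (hp : p.Prime)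
    (hodd : p % 2 = 1) (hρn : ρ.norm = (p : ℤ)) : ¬Associated ρ (star ρ) := by
  intro hass
  obtain ⟨u, hu⟩ := hass
  have habs : ρ.re.natAbs * ρ.re.natAbs + ρ.im.natAbs * ρ.im.natAbs = p := by
    rw [← GaussianInt.natAbs_norm_eq, hρn, Int.natAbs_natCast]
  have hcase : ρ.im = 0 ∨ ρ.re = 0 ∨ ρ.re = ρ.im ∨ ρ.re = -ρ.im := by
    rcases isUnit_iff.1 u.isUnit with h | h | h | h <;> rw [h] at hu <;>
      [ (have h1 := congrArg Zsqrtd.re hu; have h2 := congrArg Zsqrtd.im hu;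
         simp [Zsqrtd.re_mul, Zsqrtd.im_mul, Zsqrtd.re_star, Zsqrtd.im_star] at h1 h2;
         omega);
        (have h1 := congrArg Zsqrtd.re hu; have h2 := congrArg Zsqrtd.im hu;
         simp [Zsqrtd.re_mul, Zsqrtd.im_mul, Zsqrtd.re_star, Zsqrtd.im_star] at h1 h2;
         omega);
        (have h1 := congrArg Zsqrtd.re hu; have h2 := congrArg Zsqrtd.im hu;
         simp [Zsqrtd.re_mul, Zsqrtd.im_mul, Zsqrtd.re_star, Zsqrtd.im_star] at h1 h2;
         omega);
        (have h1 := congrArg Zsqrtd.re hu; have h2 := congrArg Zsqrtd.im hu;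
         simp [Zsqrtd.re_mul, Zsqrtd.im_mul, Zsqrtd.re_star, Zsqrtd.im_star] at h1 h2;
         omega)]
  rcases hcase with h | h | h | h
  · have : ρ.im.natAbs = 0 := by omega
    rw [this] at habs
    exact not_prime_sq hp (by omega : ρ.re.natAbs * ρ.re.natAbs = p)
  · have : ρ.re.natAbs = 0 := by omega
    rw [this] at habs
    exact not_prime_sq hp (by omega : ρ.im.natAbs * ρ.im.natAbs = p)
  · have heq : ρ.re.natAbs = ρ.im.natAbs := by omega
    rw [heq] at habs
    omega
  · have heq : ρ.re.natAbs = ρ.im.natAbs := by omega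
    rw [heq] at habs
    omega

-- chunk h : counting set-up

/-- Representations of `N` in the (closed-open) first quadrant. -/
def Qf (N : ℕ) : Finset (ℕ × ℕ) :=
  ((range (N+1)) ×ˢ (range (N+1))).filter (fun x => 1 ≤ x.1 ∧ x.1 ^ 2 + x.2 ^ 2 = N)

lemma mem_Qf {N : ℕ} {x : ℕ × ℕ} : x ∈ Qf N ↔ 1 ≤ x.1 ∧ x.1 ^ 2 + x.2 ^ 2 = N := by
  simp only [Qf, mem_filter, mem_product, mem_range]
  constructor
  · tauto
  · intro h
    have h1 : x.1 ≤ x.1 ^ 2 := Nat.le_self_pow two_ne_zero _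
    have h2 : x.2 ≤ x.2 ^ 2 := Nat.le_self_pow two_ne_zero _
    exact ⟨⟨by omega, by omega⟩, h⟩

def toZ (x : ℕ × ℕ) : GaussianInt := ⟨(x.1 : ℤ), (x.2 : ℤ)⟩

def toPair (z : GaussianInt) : ℕ × ℕ := (z.re.toNat, z.im.toNat)

lemma toPair_toZ (x : ℕ × ℕ) : toPair (toZ x) = x := by
  unfold toPair toZ
  simp

lemma toZ_toPair {z : GaussianInt} (h1 : 0 ≤ z.re) (h2 : 0 ≤ z.im) :
    toZ (toPair z) = z := by
  unfold toPair toZ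
  exact Zsqrtd.ext (by simp [Int.toNat_of_nonneg h1]) (by simp [Int.toNat_of_nonneg h2])

lemma norm_toZ (x : ℕ × ℕ) : (toZ x).norm = ((x.1 ^ 2 + x.2 ^ 2 : ℕ) : ℤ) := by
  unfold toZ
  rw [Zsqrtd.norm_def]
  dsimp only
  push_cast
  ring

lemma mem_Qf_iff {N : ℕ} {x : ℕ × ℕ} :
    x ∈ Qf N ↔ 0 < (toZ x).re ∧ (toZ x).norm = (N : ℤ) := by
  rw [mem_Qf, norm_toZ]
  unfold toZ
  dsimp only
  constructor
  · intro ⟨h1, h2⟩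
    exact ⟨by exact_mod_cast h1, by exact_mod_cast congrArg (Nat.cast : ℕ → ℤ) h2⟩
  · intro ⟨h1, h2⟩
    constructor
    · exact_mod_cast h1
    · exact_mod_cast h2

lemma im_toZ_nonneg (x : ℕ × ℕ) : 0 ≤ (toZ x).im := by
  unfold toZ; positivity

lemma mem_Qf_of_quad {z : GaussianInt} {N : ℕ} (h1 : 0 < z.re) (h2 : 0 ≤ z.im)
    (h3 : z.norm = (N : ℤ)) : toPair z ∈ Qf N := by
  rw [mem_Qf_iff, toZ_toPair (le_of_lt h1) h2]
  exact ⟨h1, h3⟩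

-- chunk i : multiplicativity of the representation count

lemma assoc_factors {m n : ℕ} (h : Nat.Coprime m n) (hm : 0 < m) {z z' w w' : GaussianInt}
    (hz : z.norm = (m : ℤ)) (hz' : z'.norm = (m : ℤ)) (hw : w.norm = (n : ℤ))
    (hass : Associated (z * w) (z' * w')) : Associated z' z := by
  have h1 : z' ∣ z * w := (dvd_mul_right z' w').trans hass.symm.dvd
  have h2 : z' ∣ z := dvd_of_dvd_mul_of_norm_coprime m z' z w n h hz' hw h1
  exact associated_of_dvd_norm_eq h2 (hz'.trans hz.symm) (ne_zero_of_norm_nat hz hm)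

lemma Qf_ne_zero {x : ℕ × ℕ} {N : ℕ} (hx : x ∈ Qf N) : toZ x ≠ 0 := by
  rw [mem_Qf_iff] at hx
  rw [ne_zero_iff]
  intro hc
  omega

lemma Qf_card_mul {m n : ℕ} (hm : 0 < m) (hn : 0 < n) (h : Nat.Coprime m n) :
    (Qf (m * n)).card = (Qf m).card * (Qf n).card := by
  classical
  rw [← Finset.card_product]
  symm
  apply Finset.card_bij (fun (x : (ℕ × ℕ) × (ℕ × ℕ)) _ =>
    toPair (quadRep (toZ x.1 * toZ x.2)))
  · -- maps into Qf (m * n)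
    intro x hx
    rw [Finset.mem_product] at hx
    have h1 := mem_Qf_iff.1 hx.1
    have h2 := mem_Qf_iff.1 hx.2
    have hz1 : toZ x.1 ≠ 0 := Qf_ne_zero hx.1
    have hz2 : toZ x.2 ≠ 0 := Qf_ne_zero hx.2
    have hmul0 : toZ x.1 * toZ x.2 ≠ 0 := mul_ne_zero hz1 hz2
    have hq := quadRep_mem hmul0
    apply mem_Qf_of_quad hq.1 hq.2
    rw [norm_quadRep, Zsqrtd.norm_mul, h1.2, h2.2]
    push_cast
    ring
  · -- injective
    intro x hx y hy hxy
    rw [Finset.mem_product] at hx hy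
    have hx1 := mem_Qf_iff.1 hx.1
    have hx2 := mem_Qf_iff.1 hx.2
    have hy1 := mem_Qf_iff.1 hy.1
    have hy2 := mem_Qf_iff.1 hy.2
    have hz1 : toZ x.1 ≠ 0 := Qf_ne_zero hx.1
    have hz2 : toZ x.2 ≠ 0 := Qf_ne_zero hx.2
    have hw1 : toZ y.1 ≠ 0 := Qf_ne_zero hy.1
    have hw2 : toZ y.2 ≠ 0 := Qf_ne_zero hy.2
    have hmx : toZ x.1 * toZ x.2 ≠ 0 := mul_ne_zero hz1 hz2
    have hmy : toZ y.1 * toZ y.2 ≠ 0 := mul_ne_zero hw1 hw2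
    have hq1 : quadRep (toZ x.1 * toZ x.2) = quadRep (toZ y.1 * toZ y.2) := by
      have e1 := congrArg toZ hxy
      rwa [toZ_toPair (le_of_lt (quadRep_mem hmx).1) (quadRep_mem hmx).2,
        toZ_toPair (le_of_lt (quadRep_mem hmy).1) (quadRep_mem hmy).2] at e1
    have hass : Associated (toZ x.1 * toZ x.2) (toZ y.1 * toZ y.2) :=
      (associated_quadRep _).trans (hq1 ▸ (associated_quadRep _).symm)
    have haz : Associated (toZ y.1) (toZ x.1) :=
      assoc_factors h hm hx1.2 hy1.2 hx2.2 hass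
    have he1 : toZ x.1 = toZ y.1 := by
      calc toZ x.1 = quadRep (toZ x.1) := (quadRep_eq_self hx1.1 (im_toZ_nonneg x.1)).symm
        _ = quadRep (toZ y.1) := quadRep_eq_of_associated haz.symm
        _ = toZ y.1 := quadRep_eq_self hy1.1 (im_toZ_nonneg y.1)
    have hass2 : Associated (toZ x.2) (toZ y.2) := by
      obtain ⟨u, hu⟩ := hass
      rw [he1] at hu
      refine ⟨u, ?_⟩
      have : toZ y.1 * (toZ x.2 * u) = toZ y.1 * toZ y.2 := by
        rw [← hu]; ring
      exact mul_left_cancel₀ hw1 this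
    have he2 : toZ x.2 = toZ y.2 := by
      calc toZ x.2 = quadRep (toZ x.2) := (quadRep_eq_self hx2.1 (im_toZ_nonneg x.2)).symm
        _ = quadRep (toZ y.2) := quadRep_eq_of_associated hass2
        _ = toZ y.2 := quadRep_eq_self hy2.1 (im_toZ_nonneg y.2)
    have p1 : x.1 = y.1 := by
      have := congrArg toPair he1
      rwa [toPair_toZ, toPair_toZ] at this
    have p2 : x.2 = y.2 := by
      have := congrArg toPair he2
      rwa [toPair_toZ, toPair_toZ] at this
    exact Prod.ext p1 p2
  · -- surjective
    intro b hb
    have hbq := mem_Qf_iff.1 hb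
    have hbim := im_toZ_nonneg b
    obtain ⟨u, v, huv, hu, hv⟩ := exists_factorization m n h (toZ b) hbq.2
    have hu0 : u ≠ 0 := ne_zero_of_norm_nat hu hm
    have hv0 : v ≠ 0 := ne_zero_of_norm_nat hv hn
    refine ⟨(toPair (quadRep u), toPair (quadRep v)), ?_, ?_⟩
    · rw [Finset.mem_product]
      constructor
      · exact mem_Qf_of_quad (quadRep_mem hu0).1 (quadRep_mem hu0).2
          (by rw [norm_quadRep]; exact hu)
      · exact mem_Qf_of_quad (quadRep_mem hv0).1 (quadRep_mem hv0).2
          (by rw [norm_quadRep]; exact hv)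
    · dsimp only
      rw [toZ_toPair (le_of_lt (quadRep_mem hu0).1) (quadRep_mem hu0).2,
        toZ_toPair (le_of_lt (quadRep_mem hv0).1) (quadRep_mem hv0).2]
      have hiter : quadRep (quadRep u * quadRep v) = quadRep (toZ b) := by
        apply quadRep_eq_of_associated
        have h1 : Associated (quadRep u * quadRep v) (u * v) :=
          Associated.mul_mul (associated_quadRep u).symm (associated_quadRep v).symm
        rw [← huv] at h1
        exact h1
      rw [hiter, quadRep_eq_self hbq.1 hbim]
      exact toPair_toZ b
-- chunk j : prime power counts

lemma norm_isUnit {u : GaussianInt} (h : IsUnit u) : u.norm = 1 := by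
  have h1 := natAbs_norm_isUnit h
  have h2 := GaussianInt.norm_nonneg u
  omega

lemma norm_associated {z w : GaussianInt} (h : Associated z w) : z.norm = w.norm := by
  obtain ⟨u, rfl⟩ := h
  rw [Zsqrtd.norm_mul, norm_isUnit u.isUnit, mul_one]

lemma Qf_card_one_of_unique {N : ℕ} (w : GaussianInt) (hw1 : 0 < w.re) (hw2 : 0 ≤ w.im)
    (hwn : w.norm = (N : ℤ))
    (huniq : ∀ z : GaussianInt, 0 < z.re → 0 ≤ z.im → z.norm = (N : ℤ) → z = w) :
    (Qf N).card = 1 := by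
  rw [Finset.card_eq_one]
  refine ⟨toPair w, Finset.eq_singleton_iff_unique_mem.2 ⟨mem_Qf_of_quad hw1 hw2 hwn, ?_⟩⟩
  intro x hx
  have h := mem_Qf_iff.1 hx
  have h2 := huniq (toZ x) h.1 (im_toZ_nonneg x) h.2
  have := congrArg toPair h2
  rwa [toPair_toZ] at this

lemma Qf_card_zero {N : ℕ}
    (hempty : ∀ z : GaussianInt, 0 < z.re → 0 ≤ z.im → z.norm ≠ (N : ℤ)) :
    (Qf N).card = 0 := by
  rw [Finset.card_eq_zero]
  apply Finset.eq_empty_of_forall_notMem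
  intro x hx
  have h := mem_Qf_iff.1 hx
  exact hempty (toZ x) h.1 (im_toZ_nonneg x) h.2

/-- Count of quadrant representations for `p ≡ 3 [MOD 4]`. -/
lemma Qf_card_p3 {p k : ℕ} (hp : p.Prime) (hp3 : p % 4 = 3) :
    (Qf (p ^ k)).card = if k % 2 = 0 then 1 else 0 := by
  haveI : Fact p.Prime := ⟨hp⟩
  have hπ : Prime ((p : ℕ) : GaussianInt) :=
    (GaussianInt.prime_iff_mod_four_eq_three_of_nat_prime p).2 hp3
  have hclass : ∀ z : GaussianInt, z.norm = ((p ^ k : ℕ) : ℤ) →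
      ∃ i : ℕ, k = 2 * i ∧ Associated z (((p : ℕ) : GaussianInt) ^ i) := by
    intro z hz
    have hdvd : z ∣ ((p : ℕ) : GaussianInt) ^ k := by
      rw [← Nat.cast_pow]
      exact ⟨star z, mul_conj_eq hz⟩
    obtain ⟨i, hik, hassoc⟩ := (dvd_prime_pow hπ k).1 hdvd
    refine ⟨i, ?_, hassoc⟩
    have hn := norm_associated hassoc
    rw [hz, norm_pow, Zsqrtd.norm_natCast] at hn
    have hn2 : ((p ^ k : ℕ) : ℤ) = ((p ^ (2 * i) : ℕ) : ℤ) := by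
      rw [hn]; push_cast; ring
    have hn3 : p ^ k = p ^ (2 * i) := by exact_mod_cast hn2
    exact Nat.pow_right_injective hp.two_le hn3
  by_cases hk : k % 2 = 0
  · rw [if_pos hk]
    obtain ⟨j, hj⟩ : ∃ j, k = 2 * j := ⟨k / 2, by omega⟩
    set w : GaussianInt := ((p ^ j : ℕ) : GaussianInt) with hwdef
    have hw1 : 0 < w.re := by
      rw [hwdef, Zsqrtd.re_natCast]
      exact_mod_cast pow_pos hp.pos j
    have hw2 : 0 ≤ w.im := by rw [hwdef, Zsqrtd.im_natCast]
    have hwn : w.norm = ((p ^ k : ℕ) : ℤ) := by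
      rw [hwdef, Zsqrtd.norm_natCast, hj]
      push_cast
      ring
    refine Qf_card_one_of_unique w hw1 hw2 hwn ?_
    intro z hz1 hz2 hzn
    obtain ⟨i, hki, hassoc⟩ := hclass z hzn
    have hij : i = j := by omega
    have hpow : (((p : ℕ) : GaussianInt)) ^ i = w := by
      rw [hwdef, Nat.cast_pow, hij]
    rw [hpow] at hassoc
    calc z = quadRep z := (quadRep_eq_self hz1 hz2).symm
      _ = quadRep w := quadRep_eq_of_associated hassoc
      _ = w := quadRep_eq_self hw1 hw2
  · rw [if_neg hk]
    refine Qf_card_zero ?_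
    intro z _ _ hzn
    obtain ⟨i, hki, _⟩ := hclass z hzn
    omega

/-- Count of quadrant representations for `p = 2`. -/
lemma Qf_card_two_pow (k : ℕ) : (Qf (2 ^ k)).card = 1 := by
  set π : GaussianInt := ⟨1, 1⟩ with hπdef
  have hπn : π.norm = ((2 : ℕ) : ℤ) := by decide
  have hπ : Prime π := prime_of_norm_prime Nat.prime_two hπn
  have hstarn : (star π).norm = ((2 : ℕ) : ℤ) := by rw [Zsqrtd.norm_conj]; exact hπn
  have hstar : Prime (star π) := prime_of_norm_prime Nat.prime_two hstarn
  have hπ0 : π ≠ 0 := hπ.ne_zero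
  have hassocstar : Associated π (star π) := by
    refine ⟨(isUnit_iff.2 (by tauto) : IsUnit (⟨0, -1⟩ : GaussianInt)).unit, ?_⟩
    rw [IsUnit.unit_spec]
    decide
  have hclass : ∀ z : GaussianInt, z.norm = ((2 ^ k : ℕ) : ℤ) → Associated z (π ^ k) := by
    intro z hz
    have hdvd : z ∣ π ^ k * (star π) ^ k := by
      rw [← mul_pow, ← mul_conj_eq hπn, ← Nat.cast_pow]
      exact ⟨star z, mul_conj_eq hz⟩
    obtain ⟨i, hik, j, hjk, hassoc⟩ := dvd_mul_prime_pow hπ hstar k k z hdvd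
    have hn := norm_associated hassoc
    rw [hz, Zsqrtd.norm_mul, norm_pow, norm_pow, hπn, hstarn] at hn
    have hn2 : ((2 ^ k : ℕ) : ℤ) = ((2 ^ (i + j) : ℕ) : ℤ) := by
      rw [hn]; push_cast; ring
    have hn3 : 2 ^ k = 2 ^ (i + j) := by exact_mod_cast hn2
    have hk : k = i + j := Nat.pow_right_injective le_rfl hn3
    refine hassoc.trans ?_
    have h1 : Associated (π ^ i * (star π) ^ j) (π ^ i * π ^ j) :=
      Associated.mul_mul (Associated.refl _) hassocstar.symm.pow_pow
    refine h1.trans ?_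
    rw [← pow_add, ← hk]
  have hqk : π ^ k ≠ 0 := pow_ne_zero k hπ0
  have hq := quadRep_mem hqk
  refine Qf_card_one_of_unique (quadRep (π ^ k)) hq.1 hq.2 ?_ ?_
  · rw [norm_quadRep, norm_pow, hπn]
    push_cast
    ring
  · intro z hz1 hz2 hzn
    have hassoc := hclass z hzn
    calc z = quadRep z := (quadRep_eq_self hz1 hz2).symm
      _ = quadRep (π ^ k) := quadRep_eq_of_associated hassoc

/-- Count of quadrant representations for `p ≡ 1 [MOD 4]`. -/
lemma Qf_card_p1 {p k : ℕ} (hp : p.Prime) (hp1 : p % 4 = 1) :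
    (Qf (p ^ k)).card = k + 1 := by
  haveI : Fact p.Prime := ⟨hp⟩
  obtain ⟨a, b, hab⟩ := Nat.Prime.sq_add_sq (p := p) (by omega)
  set ρ : GaussianInt := ⟨(a : ℤ), (b : ℤ)⟩ with hρdef
  have hρn : ρ.norm = ((p : ℕ) : ℤ) := by
    rw [hρdef, Zsqrtd.norm_def, ← hab]
    push_cast
    ring
  have hρ : Prime ρ := prime_of_norm_prime hp hρn
  have hstarn : (star ρ).norm = ((p : ℕ) : ℤ) := by rw [Zsqrtd.norm_conj]; exact hρn
  have hstar : Prime (star ρ) := prime_of_norm_prime hp hstarn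
  have hna : ¬Associated ρ (star ρ) := not_associated_star hp (by omega) hρn
  have hρ0 : ρ ≠ 0 := hρ.ne_zero
  have hstar0 : star ρ ≠ 0 := hstar.ne_zero
  have hclass : ∀ z : GaussianInt, z.norm = ((p ^ k : ℕ) : ℤ) →
      ∃ i ≤ k, Associated z (ρ ^ i * (star ρ) ^ (k - i)) := by
    intro z hz
    have hdvd : z ∣ ρ ^ k * (star ρ) ^ k := by
      rw [← mul_pow, ← mul_conj_eq hρn, ← Nat.cast_pow]
      exact ⟨star z, mul_conj_eq hz⟩
    obtain ⟨i, hik, j, hjk, hassoc⟩ := dvd_mul_prime_pow hρ hstar k k z hdvd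
    have hn := norm_associated hassoc
    rw [hz, Zsqrtd.norm_mul, norm_pow, norm_pow, hρn, hstarn] at hn
    have hn2 : ((p ^ k : ℕ) : ℤ) = ((p ^ (i + j) : ℕ) : ℤ) := by
      rw [hn]; push_cast; ring
    have hn3 : p ^ k = p ^ (i + j) := by exact_mod_cast hn2
    have hkij : k = i + j := Nat.pow_right_injective hp.two_le hn3
    exact ⟨i, by omega, by rw [show k - i = j by omega]; exact hassoc⟩
  have hne : ∀ i : ℕ, ρ ^ i * (star ρ) ^ (k - i) ≠ 0 :=
    fun i => mul_ne_zero (pow_ne_zero _ hρ0) (pow_ne_zero _ hstar0)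
  have hnorm : ∀ i : ℕ, i ≤ k → (ρ ^ i * (star ρ) ^ (k - i)).norm = ((p ^ k : ℕ) : ℤ) := by
    intro i hi
    rw [Zsqrtd.norm_mul, norm_pow, norm_pow, hρn, hstarn, ← pow_add,
      show i + (k - i) = k by omega]
    push_cast
    ring
  have : (Qf (p ^ k)).card = (range (k + 1)).card := by
    symm
    apply Finset.card_bij (fun (i : ℕ) _ => toPair (quadRep (ρ ^ i * (star ρ) ^ (k - i))))
    · intro i hi
      rw [Finset.mem_range] at hi
      have hq := quadRep_mem (hne i)
      exact mem_Qf_of_quad hq.1 hq.2 (by rw [norm_quadRep]; exact hnorm i (by omega))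
    · intro i hi i' hi' hii'
      rw [Finset.mem_range] at hi hi'
      have hq := quadRep_mem (hne i)
      have hq' := quadRep_mem (hne i')
      have e1 := congrArg toZ hii'
      rw [toZ_toPair (le_of_lt hq.1) hq.2, toZ_toPair (le_of_lt hq'.1) hq'.2] at e1
      have hassoc : Associated (ρ ^ i * (star ρ) ^ (k - i)) (ρ ^ i' * (star ρ) ^ (k - i')) :=
        (associated_quadRep _).trans (e1 ▸ (associated_quadRep _).symm)
      exact exp_eq_of_associated hρ hstar hna hassoc
    · intro x hx
      have h := mem_Qf_iff.1 hx
      obtain ⟨i, hik, hassoc⟩ := hclass (toZ x) h.2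
      refine ⟨i, Finset.mem_range.2 (by omega), ?_⟩
      have : quadRep (ρ ^ i * (star ρ) ^ (k - i)) = toZ x := by
        rw [← quadRep_eq_of_associated hassoc, quadRep_eq_self h.1 (im_toZ_nonneg x)]
      rw [this]
      exact toPair_toZ x
  rw [this, Finset.card_range]
-- chunk k : the divisor-sum side

def chi (d : ℕ) : ℤ := if d % 4 = 1 then 1 else if d % 4 = 3 then -1 else 0

lemma chi_mul (m n : ℕ) : chi (m * n) = chi m * chi n := by
  unfold chi
  rw [Nat.mul_mod]
  have hm : m % 4 < 4 := Nat.mod_lt _ (by norm_num)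
  have hn : n % 4 < 4 := Nat.mod_lt _ (by norm_num)
  interval_cases h1 : m % 4 <;> interval_cases h2 : n % 4 <;> norm_num

def chiA : ArithmeticFunction ℤ := ⟨fun d => chi d, by simp [chi]⟩

lemma chiA_apply (d : ℕ) : chiA d = chi d := rfl

lemma chiA_mult : chiA.IsMultiplicative :=
  ⟨by rw [chiA_apply]; simp [chi], fun {m n} _ => chi_mul m n⟩

open ArithmeticFunction ArithmeticFunction.zeta in
lemma L_mult :
    ((↑(ζ : ArithmeticFunction ℕ) : ArithmeticFunction ℤ) * chiA).IsMultiplicative :=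
  isMultiplicative_zeta.natCast.mul chiA_mult

open ArithmeticFunction ArithmeticFunction.zeta in
lemma L_eq (N : ℕ) :
    ((↑(ζ : ArithmeticFunction ℕ) : ArithmeticFunction ℤ) * chiA) N
      = ∑ d ∈ N.divisors, chi d := by
  rw [coe_zeta_mul_apply]
  rfl

lemma chi_pow_p1 {p : ℕ} (hp1 : p % 4 = 1) (i : ℕ) : chi (p ^ i) = 1 := by
  unfold chi
  rw [Nat.pow_mod, hp1, one_pow]
  norm_num

lemma chi_pow_p3 {p : ℕ} (hp3 : p % 4 = 3) (i : ℕ) : chi (p ^ i) = (-1) ^ i := by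
  unfold chi
  rw [Nat.pow_mod, hp3]
  induction i with
  | zero => norm_num
  | succ i ih =>
    rcases Nat.even_or_odd i with h | h
    · have h2 : 3 ^ i % 4 = 1 := by
        rcases h with ⟨j, rfl⟩
        rw [show j + j = 2 * j by ring, pow_mul, Nat.pow_mod]
        norm_num
      rw [pow_succ, Nat.mul_mod, h2]
      simp [pow_succ, h.neg_one_pow]
    · have h2 : 3 ^ i % 4 = 3 := by
        rcases h with ⟨j, rfl⟩
        rw [pow_add, pow_mul, Nat.mul_mod, Nat.pow_mod]
        norm_num
      rw [pow_succ, Nat.mul_mod, h2]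
      norm_num [pow_succ, h.neg_one_pow]

lemma chi_pow_two (i : ℕ) : chi (2 ^ i) = if i = 0 then 1 else 0 := by
  unfold chi
  rcases i with _ | i
  · norm_num
  · have h1 : (2 : ℕ) ∣ 2 ^ (i + 1) := dvd_pow_self 2 (by omega)
    have h2 : 2 ^ (i + 1) % 4 ≠ 1 ∧ 2 ^ (i + 1) % 4 ≠ 3 := by
      obtain ⟨t, ht⟩ := h1
      omega
    simp [h2.1, h2.2]
-- chunk l : master identity

lemma L_pp {p k : ℕ} (hp : p.Prime) :
    ∑ d ∈ (p ^ k).divisors, chi d = ((Qf (p ^ k)).card : ℤ) := by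
  rw [Nat.sum_divisors_prime_pow hp]
  by_cases hp1 : p % 4 = 1
  · rw [Qf_card_p1 hp hp1]
    have h : ∀ i ∈ range (k + 1), chi (p ^ i) = 1 := fun i _ => chi_pow_p1 hp1 i
    rw [Finset.sum_congr rfl h, Finset.sum_const, Finset.card_range]
    push_cast
    ring
  by_cases hp3 : p % 4 = 3
  · rw [Qf_card_p3 hp hp3]
    have h : ∀ i ∈ range (k + 1), chi (p ^ i) = (-1 : ℤ) ^ i := fun i _ => chi_pow_p3 hp3 i
    rw [Finset.sum_congr rfl h, neg_one_geom_sum]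
    simp only [Nat.even_add_one, Nat.even_iff]
    split_ifs <;> simp_all
  · have hp2 : p = 2 := (Nat.Prime.even_iff hp).1 (Nat.even_iff.2 (by omega))
    subst hp2
    rw [Qf_card_two_pow]
    rw [Finset.sum_congr rfl (fun i _ => chi_pow_two i)]
    rw [Finset.sum_ite_eq' (range (k + 1)) 0 (fun _ => (1 : ℤ))]
    simp

lemma main_identity (N : ℕ) : ∑ d ∈ N.divisors, chi d = ((Qf N).card : ℤ) := by
  induction N using Nat.recOnPosPrimePosCoprime with
  | prime_pow p k hp hk => exact L_pp hp
  | zero =>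
    rw [Nat.divisors_zero]
    rw [Qf_card_zero]
    · simp
    · intro z h1 _ h3
      rw [Nat.cast_zero] at h3
      have := GaussianInt.norm_eq_zero.1 h3
      rw [this] at h1
      simp at h1
  | one =>
    have h := Qf_card_two_pow 0
    rw [pow_zero] at h
    rw [h, Nat.divisors_one, Finset.sum_singleton]
    simp [chi]
  | coprime a b ha hb hab iha ihb =>
    have e1 := L_mult.map_mul_of_coprime hab
    rw [L_eq, L_eq, L_eq] at e1
    rw [e1, iha, ihb, Qf_card_mul (by omega) (by omega) hab]
    push_cast
    ring

-- chunk m : splitting the quadrant count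

lemma mem_pairs {N : ℕ} {x : ℕ × ℕ} :
    x ∈ ((range (N+1)) ×ˢ (range (N+1))).filter
        (fun p => 1 ≤ p.1 ∧ 1 ≤ p.2 ∧ p.1 ^ 2 + p.2 ^ 2 = N) ↔
      1 ≤ x.1 ∧ 1 ≤ x.2 ∧ x.1 ^ 2 + x.2 ^ 2 = N := by
  simp only [mem_filter, mem_product, mem_range]
  constructor
  · tauto
  · intro h
    have h1 : x.1 ≤ x.1 ^ 2 := Nat.le_self_pow two_ne_zero _
    have h2 : x.2 ≤ x.2 ^ 2 := Nat.le_self_pow two_ne_zero _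
    exact ⟨⟨by omega, by omega⟩, h⟩

lemma Qf_split (N : ℕ) :
    (Qf N).card = ((Finset.range (N + 1)).filter (fun k => 1 ≤ k ∧ k ^ 2 = N)).card
      + (((Finset.range (N + 1)) ×ˢ (Finset.range (N + 1))).filter
          (fun p => 1 ≤ p.1 ∧ 1 ≤ p.2 ∧ p.1 ^ 2 + p.2 ^ 2 = N)).card := by
  classical
  have hsplit := Finset.card_filter_add_card_filter_not
    (s := Qf N) (p := fun x : ℕ × ℕ => x.2 = 0)
  have hA : ((Qf N).filter (fun x => x.2 = 0)).card
      = ((Finset.range (N + 1)).filter (fun k => 1 ≤ k ∧ k ^ 2 = N)).card := by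
    symm
    apply Finset.card_bij (fun (k : ℕ) _ => ((k, 0) : ℕ × ℕ))
    · intro k hk
      rw [Finset.mem_filter, Finset.mem_range] at hk
      rw [Finset.mem_filter]
      refine ⟨mem_Qf.2 ⟨hk.2.1, ?_⟩, rfl⟩
      simpa using hk.2.2
    · intro k _ k' _ h
      exact congrArg Prod.fst h
    · intro x hx
      rw [Finset.mem_filter] at hx
      have h1 := mem_Qf.1 hx.1
      have h2 := hx.2
      refine ⟨x.1, ?_, ?_⟩
      · rw [Finset.mem_filter, Finset.mem_range]
        have h3 : x.1 ≤ x.1 ^ 2 := Nat.le_self_pow two_ne_zero _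
        refine ⟨by omega, h1.1, ?_⟩
        have := h1.2
        rw [h2] at this
        simpa using this
      · exact Prod.ext rfl h2.symm
  have hB : ((Qf N).filter (fun x => ¬x.2 = 0)).card
      = (((Finset.range (N + 1)) ×ˢ (Finset.range (N + 1))).filter
          (fun p => 1 ≤ p.1 ∧ 1 ≤ p.2 ∧ p.1 ^ 2 + p.2 ^ 2 = N)).card := by
    congr 1
    apply Finset.ext
    intro x
    rw [Finset.mem_filter, mem_Qf, mem_pairs]
    omega
  omega

lemma chi_eq (d : ℕ) :
    chi d = (if d % 4 = 1 then (1 : ℤ) else 0) - (if d % 4 = 3 then (1 : ℤ) else 0) := by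
  unfold chi
  split_ifs <;> omega

end Fine

/-- Fine's identity (26.63) / Jacobi's two-squares theorem, coefficientwise:
`d₁(N) − d₃(N) = #{k ≥ 1 : k² = N} + #{(a,b) : a,b ≥ 1, a² + b² = N}`. -/
theorem fine_26_63 (N : ℕ) (hN : 0 < N) :
    ((N.divisors.filter (fun d => d % 4 = 1)).card : ℤ)
        - ((N.divisors.filter (fun d => d % 4 = 3)).card : ℤ)
      = (((Finset.range (N + 1)).filter (fun k => 1 ≤ k ∧ k ^ 2 = N)).card : ℤ)
        + ((((Finset.range (N + 1)) ×ˢ (Finset.range (N + 1))).filter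
            (fun p => 1 ≤ p.1 ∧ 1 ≤ p.2 ∧ p.1 ^ 2 + p.2 ^ 2 = N)).card : ℤ) := by
  classical
  have hL : ((N.divisors.filter (fun d => d % 4 = 1)).card : ℤ)
      - ((N.divisors.filter (fun d => d % 4 = 3)).card : ℤ)
      = ∑ d ∈ N.divisors, Fine.chi d := by
    rw [Finset.sum_congr rfl (fun d _ => Fine.chi_eq d), Finset.sum_sub_distrib,
      Finset.sum_boole, Finset.sum_boole]
  rw [hL, Fine.main_identity, Fine.Qf_split]
  push_cast
  ring
end
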